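/- arXiv:1906.04074 — 9 statements merged into one kernel-verified Lean document; each statement's English description precedes it below -/
import Mathlib

section
/- Let β ∈ ℝ³ be a unit vector of the form β = (c η₀, 0, η₀) for some c ∈ ℝ and η₀ ≠ 0 (β may or may not equal β_l), and set N(ζ) := √((σ − cη)² + γ²) for ζ = (σ, γ, η). Then there exist δ₀ > 0 and ε₀ > 0, depending only on β and β_l, with the following property. Let δ ∈ (0, δ₀], let A₂ ≥ A₁ > 0, and let Δ : Ξ → ℂ satisfy A₁ · N(ζ)/|ζ| ≤ |Δ(ζ)| ≤ A₂ · N(ζ)/|ζ| for all ζ ∈ Γ_δ(β), and A₁ ≤ |Δ(ζ)| ≤ A₂ for all ζ ∈ Ξ \ Γ_δ(β). Then there exist constants C₁, C₂ > 0, depending only on β, β_l, A₁, A₂ and δ (in particular independent of ζ, ε, the admissible sequence, and the index j), such that for every ε ∈ (0, ε₀], every ζ = (σ, γ, η) ∈ Ξ with γ > 0, and every admissible sequence (k_j): the set of indices j ∈ ℤ with X_{k_j} ∈ Γ_δ(β) and |Δ(X_{k_{j−1}})| > C₁ |r_j| · |Δ(X_{k_j})| contains at most one element; moreover, every j in this set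 satisfies |Δ(X_{k_{j−1}})| ≤ (C₂ |r_j| / (ε γ)) · |Δ(X_{k_j})|. -/
noncomputable section

open scoped RealInnerProductSpace

/-- `ℝ³` with the Euclidean norm, coordinates `ζ = (σ, γ, η) = (ζ 0, ζ 1, ζ 2)`. -/
abbrev E3 : Type := EuclideanSpace ℝ (Fin 3)

/-- The frequency set `Ξ := {ζ ∈ ℝ³ : γ ≥ 0} \ {0}`. -/
def Xi : Set E3 := {ζ : E3 | 0 ≤ ζ 1 ∧ ζ ≠ 0}

/-- The cone `Γ_δ(β) := {ζ ∈ Ξ : |ζ/|ζ| − β| ≤ δ or |ζ/|ζ| + β| ≤ δ}`. -/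
def cone (β : E3) (δ : ℝ) : Set E3 :=
  {ζ : E3 | ζ ∈ Xi ∧ (‖‖ζ‖⁻¹ • ζ - β‖ ≤ δ ∨ ‖‖ζ‖⁻¹ • ζ + β‖ ≤ δ)}

/-- `X_k := ζ + (k/ε) β_l`. -/
def Xk (βl ζ : E3) (ε : ℝ) (k : ℤ) : E3 := ζ + (((k : ℝ)) / ε) • βl

/-- A bi-infinite integer sequence is admissible if it is strictly increasing or
strictly decreasing. -/
def Admissible (k : ℤ → ℤ) : Prop := StrictMono k ∨ StrictAnti k

/-!
Write `N(ζ) = √((σ - cη)² + γ²)` (`transverseNorm c`) and `ρ(ζ) = N(ζ)/|ζ|`. Off the cone the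
direction of `ζ` stays `δ` away from `±β`, which gives `ρ(ζ) ≥ δ²/2`; together with
`ρ ≤ √(1 + c²)` this makes `|Δ|` comparable to `ρ` on all of `Ξ`. So at an exceptional index `ρ`
itself jumps by more than `4K|r_j|` from `X_{k_j}` to `X_{k_{j-1}}`, for a `K ≥ 1` depending only
on `β` and `β_l`.

Along the orbit `X_k = ζ + (k/ε)β_l` the coordinate `γ` is constant, `N` moves by at most
`|b|/ε` per step with `b = σ(β_l) - c η(β_l)`, and `N, |X_k| ≥ γ`. If `b = 0` the jump must come
from `|X|` and forces `|X_{k_{j-1}}| < 1/(3ε)`; if `b ≠ 0` then `β_l ≠ ±β`, so on a thin cone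
around `±β` moving along `β_l` cannot shrink `|X|` by more than a factor `K`, and the jump forces
`N(X_{k_j}) < |b|/(3ε)`. Either way an affine function of the index with step `1/ε`, resp. `b/ε`,
is less than half a step from `0`, which happens at most once; the same inequalities bound the
ratio by `(4/3) K (1 + |b|) |r_j| / (εγ)`.
-/

theorem half_le_norm_sub_and_norm_add {E : Type*} [SeminormedAddCommGroup E] {u v w : E}
    {θ δ : ℝ} (hδ : δ ≤ θ / 2) (hθ₁ : θ ≤ ‖w - v‖) (hθ₂ : θ ≤ ‖w + v‖) (hu : ‖u - w‖ ≤ δ) :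
    θ / 2 ≤ ‖u - v‖ ∧ θ / 2 ≤ ‖u + v‖ := by
  have h₁ := norm_sub_le_norm_sub_add_norm_sub w u v
  have h₂ := norm_sub_le_norm_sub_add_norm_sub w u (-v)
  rw [sub_neg_eq_add, sub_neg_eq_add] at h₂
  rw [norm_sub_rev w u] at h₁ h₂
  constructor <;> linarith

section InnerProduct

variable {F : Type*} [NormedAddCommGroup F] [InnerProductSpace ℝ F]

theorem norm_sq_sub_inner_sq_le_norm_add_smul_sq {v : F} (hv : ‖v‖ = 1) (x : F) (t : ℝ) :
    ‖x‖ ^ 2 - ⟪x, v⟫ ^ 2 ≤ ‖x + t • v‖ ^ 2 := by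
  rw [norm_add_sq_real, real_inner_smul_right, norm_smul, Real.norm_eq_abs, hv]
  nlinarith [sq_nonneg (t + ⟪x, v⟫), sq_abs t]

theorem sq_mul_norm_le_norm_sq_sub_inner_sq {v x : F} (hv : ‖v‖ = 1) (hx : x ≠ 0) {r : ℝ}
    (hr : 0 ≤ r) (h₁ : r ≤ ‖‖x‖⁻¹ • x - v‖) (h₂ : r ≤ ‖‖x‖⁻¹ • x + v‖) :
    (r ^ 2 / 2 * ‖x‖) ^ 2 ≤ ‖x‖ ^ 2 - ⟪x, v⟫ ^ 2 := by
  set u := ‖x‖⁻¹ • x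
  have hu : ‖u‖ = 1 := norm_smul_inv_norm hx
  have hxu : ⟪x, v⟫ = ‖x‖ * ⟪u, v⟫ := by
    rw [real_inner_smul_left, ← mul_assoc, mul_inv_cancel₀ (norm_ne_zero_iff.mpr hx), one_mul]
  have hprod : ‖u - v‖ ^ 2 * ‖u + v‖ ^ 2 = 4 * (1 - ⟪u, v⟫ ^ 2) := by
    rw [norm_sub_sq_real, norm_add_sq_real, hu, hv]; ring
  have hr4 : r ^ 2 * r ^ 2 ≤ ‖u - v‖ ^ 2 * ‖u + v‖ ^ 2 :=
    mul_le_mul (pow_le_pow_left₀ hr h₁ 2) (pow_le_pow_left₀ hr h₂ 2) (by positivity)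
      (by positivity)
  rw [hxu]
  nlinarith [sq_nonneg ‖x‖]

theorem norm_le_mul_norm_add_smul {v w x : F} (hv : ‖v‖ = 1) (hx : x ≠ 0) {θ δ : ℝ}
    (hθ : 0 < θ) (hδ : δ ≤ θ / 2) (hθ₁ : θ ≤ ‖w - v‖) (hθ₂ : θ ≤ ‖w + v‖)
    (hxw : ‖‖x‖⁻¹ • x - w‖ ≤ δ ∨ ‖‖x‖⁻¹ • x + w‖ ≤ δ) (t : ℝ) :
    ‖x‖ ≤ 8 / θ ^ 2 * ‖x + t • v‖ := by
  obtain ⟨h₁, h₂⟩ : θ / 2 ≤ ‖‖x‖⁻¹ • x - v‖ ∧ θ / 2 ≤ ‖‖x‖⁻¹ • x + v‖ := by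
    rcases hxw with h | h
    · exact half_le_norm_sub_and_norm_add hδ hθ₁ hθ₂ h
    · rw [← sub_neg_eq_add] at h
      refine half_le_norm_sub_and_norm_add hδ ?_ ?_ h
      · rwa [← norm_neg, neg_sub, sub_neg_eq_add, add_comm]
      · rwa [neg_add_eq_sub, norm_sub_rev]
  have hsq := (sq_mul_norm_le_norm_sq_sub_inner_sq hv hx (by positivity) h₁ h₂).trans
    (norm_sq_sub_inner_sq_le_norm_add_smul_sq hv x t)
  have hle : (θ / 2) ^ 2 / 2 * ‖x‖ ≤ ‖x + t • v‖ :=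
    abs_le_of_sq_le_sq' hsq (norm_nonneg _) |>.2
  rw [div_mul_eq_mul_div, le_div_iff₀ (by positivity)]
  nlinarith

end InnerProduct

theorem lt_and_le_mul_of_four_mul_lt {p q L R ε γ : ℝ} (hγ : 0 < γ) (hp : γ ≤ p) (hε : 0 < ε)
    (hR : 1 ≤ R) (hpq : 4 * R * p < q) (hq : q ≤ p + L / ε * R) :
    p < L / ε / 3 ∧ q ≤ 4 / 3 * L * R / (ε * γ) * p := by
  set M := L / ε
  have hsmall : p < M / 3 := by nlinarith
  have hM : 0 < M := by linarith
  refine ⟨hsmall, ?_⟩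
  rw [show 4 / 3 * L * R / (ε * γ) = 4 / 3 * M * R / γ by simp only [M]; field_simp,
    div_mul_eq_mul_div, le_div_iff₀ hγ]
  nlinarith [mul_le_mul_of_nonneg_left hR hM.le]

theorem subsingleton_setOf_abs_add_int_mul_lt (x r : ℝ) :
    {m : ℤ | |x + m * r| < |r| / 2}.Subsingleton := by
  intro m hm n hn
  have h : |((m - n : ℤ) : ℝ)| * |r| < 1 * |r| := by
    rw [← abs_mul]
    calc |((m - n : ℤ) : ℝ) * r| = |(x + m * r) - (x + n * r)| := by push_cast; ring_nf
      _ ≤ |x + m * r| + |x + n * r| := abs_sub _ _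
      _ < |r| / 2 + |r| / 2 := add_lt_add hm hn
      _ = 1 * |r| := by ring
  have h1 : |m - n| < 1 := by exact_mod_cast lt_of_mul_lt_mul_right h (abs_nonneg r)
  rw [abs_lt] at h1
  omega

section Comparable

variable {da dz ρa ρz c₁ c₂ : ℝ}

theorem lt_of_comparable (hc₁ : 0 < c₁) (hc₂ : 0 < c₂) (hz : c₁ * ρz ≤ dz)
    (ha : da ≤ c₂ * ρa) {K R : ℝ} (hKR : 0 ≤ K * R) (h : c₂ / c₁ * K * R * dz < da) :
    K * R * ρz < ρa := by
  refine lt_of_mul_lt_mul_left ?_ hc₂.le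
  calc c₂ * (K * R * ρz) = c₂ / c₁ * (K * R) * (c₁ * ρz) := by field_simp
    _ ≤ c₂ / c₁ * (K * R) * dz := mul_le_mul_of_nonneg_left hz (by positivity)
    _ < da := by rwa [← mul_assoc]
    _ ≤ c₂ * ρa := ha

theorem le_of_comparable (hc₁ : 0 < c₁) (hc₂ : 0 < c₂) (hz : c₁ * ρz ≤ dz)
    (ha : da ≤ c₂ * ρa) {M : ℝ} (hM : 0 ≤ M) (h : ρa ≤ M * ρz) : da ≤ c₂ / c₁ * M * dz :=
  calc da ≤ c₂ * ρa := ha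
    _ ≤ c₂ * (M * ρz) := mul_le_mul_of_nonneg_left h hc₂.le
    _ = c₂ / c₁ * M * (c₁ * ρz) := by field_simp
    _ ≤ c₂ / c₁ * M * dz := mul_le_mul_of_nonneg_left hz (by positivity)

end Comparable

def transverseNorm (c : ℝ) (x : E3) : ℝ := √((x 0 - c * x 2) ^ 2 + x 1 ^ 2)

namespace transverseNorm

variable {c : ℝ}

theorem abs_apply_one_le (x : E3) : |x 1| ≤ transverseNorm c x :=
  Real.abs_le_sqrt (le_add_of_nonneg_left (sq_nonneg _))

theorem abs_sub_mul_le (x : E3) : |x 0 - c * x 2| ≤ transverseNorm c x :=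
  Real.abs_le_sqrt (le_add_of_nonneg_right (sq_nonneg _))

theorem nonneg (x : E3) : 0 ≤ transverseNorm c x := Real.sqrt_nonneg _

theorem le_mul_norm (x : E3) : transverseNorm c x ≤ √(1 + c ^ 2) * ‖x‖ := by
  rw [← Real.sqrt_sq (norm_nonneg x), ← Real.sqrt_mul (by positivity)]
  refine Real.sqrt_le_sqrt ?_
  rw [EuclideanSpace.norm_sq_eq, Fin.sum_univ_three]
  simp only [Real.norm_eq_abs, sq_abs]
  nlinarith [sq_nonneg (c * x 0 + x 2), sq_nonneg (c * x 1)]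

theorem add_smul_le {v : E3} (hv : v 1 = 0) (x : E3) (t : ℝ) :
    transverseNorm c (x + t • v) ≤ transverseNorm c x + |t| * |v 0 - c * v 2| := by
  set u := t * (v 0 - c * v 2)
  have hcoord : (x + t • v) 0 - c * (x + t • v) 2 = (x 0 - c * x 2) + u := by
    simp only [PiLp.add_apply, PiLp.smul_apply, smul_eq_mul, u]; ring
  have hS : transverseNorm c x ^ 2 = (x 0 - c * x 2) ^ 2 + x 1 ^ 2 :=
    Real.sq_sqrt (by positivity)
  have hcross : (x 0 - c * x 2) * u ≤ transverseNorm c x * |u| :=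
    (le_abs_self _).trans (abs_mul _ u ▸
      mul_le_mul_of_nonneg_right (abs_sub_mul_le x) (abs_nonneg u))
  rw [← abs_mul, transverseNorm, hcoord, Real.sqrt_le_iff]
  refine ⟨add_nonneg (Real.sqrt_nonneg _) (abs_nonneg _), ?_⟩
  simp only [PiLp.add_apply, PiLp.smul_apply, smul_eq_mul, hv, mul_zero, add_zero]
  nlinarith [sq_abs u]

theorem eq_norm_sub_smul {η₀ : ℝ} (hη₀ : η₀ ≠ 0) {β : E3} (hβ0 : β 0 = c * η₀) (hβ1 : β 1 = 0)
    (hβ2 : β 2 = η₀) (x : E3) : transverseNorm c x = ‖x - (x 2 / η₀) • β‖ := by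
  rw [EuclideanSpace.norm_eq, transverseNorm, Fin.sum_univ_three]
  simp only [PiLp.sub_apply, PiLp.smul_apply, smul_eq_mul, Real.norm_eq_abs, sq_abs, hβ0, hβ1,
    hβ2]
  congr 1
  field_simp
  ring

theorem sq_norm_sub_inner_sq_le {η₀ : ℝ} (hη₀ : η₀ ≠ 0) {β : E3}
    (hβ0 : β 0 = c * η₀) (hβ1 : β 1 = 0) (hβ2 : β 2 = η₀) (hβu : ‖β‖ = 1) (x : E3) :
    ‖x‖ ^ 2 - ⟪x, β⟫ ^ 2 ≤ transverseNorm c x ^ 2 := by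
  have h := norm_sq_sub_inner_sq_le_norm_add_smul_sq hβu x (-(x 2 / η₀))
  rwa [neg_smul, ← sub_eq_add_neg, ← eq_norm_sub_smul hη₀ hβ0 hβ1 hβ2] at h

theorem mul_norm_le_of_notMem_cone {η₀ : ℝ} (hη₀ : η₀ ≠ 0) {β : E3}
    (hβ0 : β 0 = c * η₀) (hβ1 : β 1 = 0) (hβ2 : β 2 = η₀) (hβu : ‖β‖ = 1) {δ : ℝ}
    (hδ : 0 ≤ δ) {x : E3} (hx : x ∈ Xi \ cone β δ) :
    δ ^ 2 / 2 * ‖x‖ ≤ transverseNorm c x := by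
  obtain ⟨hxXi, hxcone⟩ := hx
  have hfar : δ ≤ ‖‖x‖⁻¹ • x - β‖ ∧ δ ≤ ‖‖x‖⁻¹ • x + β‖ := by
    by_contra h
    rw [not_and_or, not_le, not_le] at h
    exact hxcone ⟨hxXi, h.imp le_of_lt le_of_lt⟩
  have hsq := (sq_mul_norm_le_norm_sq_sub_inner_sq hβu hxXi.2 hδ hfar.1 hfar.2).trans
    (sq_norm_sub_inner_sq_le hη₀ hβ0 hβ1 hβ2 hβu x)
  exact (abs_le_of_sq_le_sq' hsq (Real.sqrt_nonneg _)).2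

end transverseNorm

theorem exists_cone_norm_le_mul_norm_add_smul {βl : E3} (hβlu : ‖βl‖ = 1) {c η₀ : ℝ}
    {β : E3} (hβ0 : β 0 = c * η₀) (hβ2 : β 2 = η₀) (hβu : ‖β‖ = 1) :
    ∃ δ₀ > (0 : ℝ), δ₀ ≤ 1 ∧ ∃ K ≥ (1 : ℝ), βl 0 - c * βl 2 ≠ 0 →
      ∀ δ ≤ δ₀, ∀ x ∈ cone β δ, ∀ t : ℝ, ‖x‖ ≤ K * ‖x + t • βl‖ := by
  by_cases hb : βl 0 - c * βl 2 = 0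
  · exact ⟨1, one_pos, le_rfl, 1, le_rfl, fun h => absurd hb h⟩
  have hne : ∀ w : E3, w 0 - c * w 2 ≠ 0 → w ≠ β := by
    rintro w hw rfl
    exact hw (by rw [hβ0, hβ2]; ring)
  have hθ₁ : 0 < ‖β - βl‖ := norm_sub_pos_iff.mpr (hne βl hb).symm
  have hθ₂ : 0 < ‖β + βl‖ := by
    rw [← sub_neg_eq_add, norm_sub_pos_iff]
    refine (hne (-βl) fun h => hb ?_).symm
    simp only [PiLp.neg_apply] at h
    linarith
  set θ := min ‖β - βl‖ ‖β + βl‖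
  have hθ : 0 < θ := lt_min hθ₁ hθ₂
  have hθ2 : θ ≤ 2 := (min_le_left _ _).trans
    ((norm_sub_le _ _).trans (by rw [hβu, hβlu]; norm_num))
  refine ⟨min 1 (θ / 2), lt_min one_pos (by positivity), min_le_left _ _, 8 / θ ^ 2, ?_,
    fun _ δ hδ x hx t => ?_⟩
  · rw [ge_iff_le, le_div_iff₀ (by positivity)]
    nlinarith
  exact norm_le_mul_norm_add_smul hβlu hx.1.2 hθ (hδ.trans (min_le_right _ _))
    (min_le_left _ _) (min_le_right _ _) hx.2 t

theorem le_norm_and_norm_le_of_cone_bounds {c η₀ : ℝ} (hη₀ : η₀ ≠ 0) {β : E3}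
    (hβ0 : β 0 = c * η₀) (hβ1 : β 1 = 0) (hβ2 : β 2 = η₀) (hβu : ‖β‖ = 1) {δ A₁ A₂ : ℝ}
    (hδ : 0 < δ) (hδ1 : δ ≤ 1)
    (hA₁ : 0 ≤ A₁) (hA₂ : 0 ≤ A₂) {Δ : E3 → ℂ}
    (hin : ∀ ζ ∈ cone β δ, A₁ * (transverseNorm c ζ / ‖ζ‖) ≤ ‖Δ ζ‖ ∧
      ‖Δ ζ‖ ≤ A₂ * (transverseNorm c ζ / ‖ζ‖))
    (hout : ∀ ζ ∈ Xi \ cone β δ, A₁ ≤ ‖Δ ζ‖ ∧ ‖Δ ζ‖ ≤ A₂) {x : E3} (hx : x ∈ Xi) :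
    A₁ / √(1 + c ^ 2) * (transverseNorm c x / ‖x‖) ≤ ‖Δ x‖ ∧
      ‖Δ x‖ ≤ 2 * A₂ / δ ^ 2 * (transverseNorm c x / ‖x‖) := by
  have hx0 : 0 < ‖x‖ := norm_pos_iff.mpr hx.2
  have hρ0 : 0 ≤ transverseNorm c x / ‖x‖ := div_nonneg (Real.sqrt_nonneg _) hx0.le
  have hL : 1 ≤ √(1 + c ^ 2) := Real.one_le_sqrt.mpr (by nlinarith [sq_nonneg c])
  by_cases hcone : x ∈ cone β δ
  · obtain ⟨h₁, h₂⟩ := hin x hcone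
    have hA : A₂ ≤ 2 * A₂ / δ ^ 2 := by
      rw [le_div_iff₀ (by positivity)]
      nlinarith [pow_le_one₀ hδ.le hδ1 (n := 2)]
    exact ⟨le_trans (mul_le_mul_of_nonneg_right (div_le_self hA₁ hL) hρ0) h₁,
      h₂.trans (mul_le_mul_of_nonneg_right hA hρ0)⟩
  · obtain ⟨h₁, h₂⟩ := hout x ⟨hx, hcone⟩
    have hρL : transverseNorm c x / ‖x‖ ≤ √(1 + c ^ 2) :=
      (div_le_iff₀ hx0).mpr (transverseNorm.le_mul_norm x)
    have hρδ : δ ^ 2 / 2 ≤ transverseNorm c x / ‖x‖ :=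
      (le_div_iff₀ hx0).mpr
        (transverseNorm.mul_norm_le_of_notMem_cone hη₀ hβ0 hβ1 hβ2 hβu hδ.le ⟨hx, hcone⟩)
    refine ⟨le_trans ?_ h₁, h₂.trans ?_⟩
    · rw [div_mul_eq_mul_div, div_le_iff₀ (by positivity)]
      exact mul_le_mul_of_nonneg_left hρL hA₁
    · calc A₂ = 2 * A₂ / δ ^ 2 * (δ ^ 2 / 2) := by field_simp
        _ ≤ _ := mul_le_mul_of_nonneg_left hρδ (by positivity)

section Orbit

variable {βl ζ : E3} {c ε : ℝ}

theorem Xk_apply_one (hβl1 : βl 1 = 0) (m : ℤ) : Xk βl ζ ε m 1 = ζ 1 := by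
  simp [Xk, hβl1]

theorem Xk_mem_Xi (hβl1 : βl 1 = 0) (hγ : 0 < ζ 1) (m : ℤ) : Xk βl ζ ε m ∈ Xi := by
  refine ⟨(Xk_apply_one hβl1 m).symm ▸ hγ.le, fun h => hγ.ne' ?_⟩
  rw [← Xk_apply_one hβl1 m, h, PiLp.zero_apply]

theorem Xk_eq_add_smul (m m' : ℤ) :
    Xk βl ζ ε m = Xk βl ζ ε m' + (((m - m' : ℤ) : ℝ) / ε) • βl := by
  simp only [Xk, Int.cast_sub, sub_div, sub_smul]
  abel

theorem norm_Xk_le (hβlu : ‖βl‖ = 1) (hε : 0 < ε) (m m' : ℤ) :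
    ‖Xk βl ζ ε m‖ ≤ ‖Xk βl ζ ε m'‖ + 1 / ε * ((|m - m'| : ℤ) : ℝ) := by
  rw [Xk_eq_add_smul m m']
  refine (norm_add_le _ _).trans_eq ?_
  rw [norm_smul, hβlu, Real.norm_eq_abs, abs_div, abs_of_pos hε, Int.cast_abs]
  ring

theorem transverseNorm_Xk_le (hβl1 : βl 1 = 0) (hε : 0 < ε) (m m' : ℤ) :
    transverseNorm c (Xk βl ζ ε m) ≤
      transverseNorm c (Xk βl ζ ε m') + |βl 0 - c * βl 2| / ε * ((|m - m'| : ℤ) : ℝ) := by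
  rw [Xk_eq_add_smul m m']
  refine (transverseNorm.add_smul_le hβl1 _ _).trans_eq ?_
  rw [abs_div, abs_of_pos hε, Int.cast_abs]
  ring

theorem apply_one_le_transverseNorm_Xk (hβl1 : βl 1 = 0) (m : ℤ) :
    ζ 1 ≤ transverseNorm c (Xk βl ζ ε m) :=
  ((Xk_apply_one hβl1 m).symm.trans_le (le_abs_self _)).trans
    (transverseNorm.abs_apply_one_le _)

theorem apply_one_le_norm_Xk (hβl1 : βl 1 = 0) (m : ℤ) : ζ 1 ≤ ‖Xk βl ζ ε m‖ :=
  ((Xk_apply_one hβl1 m).symm.trans_le (le_abs_self _)).trans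
    (by simpa using PiLp.norm_apply_le (Xk βl ζ ε m) 1)

-- The localisation is read off the `βl`-coordinate of `X_m`, which moves by `1/ε` per step.
theorem parallel_jump (hβlu : ‖βl‖ = 1) (hβl1 : βl 1 = 0) (hb : βl 0 - c * βl 2 = 0)
    (hε : 0 < ε) (hγ : 0 < ζ 1) {m m' : ℤ} (hR : (1 : ℝ) ≤ ((|m' - m| : ℤ) : ℝ)) {K : ℝ}
    (hK : 1 ≤ K)
    (hjump : 4 * K * ((|m' - m| : ℤ) : ℝ) * transverseNorm c (Xk βl ζ ε m') * ‖Xk βl ζ ε m‖ <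
      transverseNorm c (Xk βl ζ ε m) * ‖Xk βl ζ ε m'‖) :
    |⟪ζ, βl⟫ + m * (1 / ε)| < |1 / ε| / 2 ∧
      transverseNorm c (Xk βl ζ ε m) * ‖Xk βl ζ ε m'‖ ≤
        4 / 3 * 1 * ((|m' - m| : ℤ) : ℝ) / (ε * ζ 1) *
          (transverseNorm c (Xk βl ζ ε m') * ‖Xk βl ζ ε m‖) := by
  have hN : transverseNorm c (Xk βl ζ ε m) = transverseNorm c (Xk βl ζ ε m') :=
    le_antisymm (by simpa [hb] using transverseNorm_Xk_le (c := c) hβl1 hε m m')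
      (by simpa [hb] using transverseNorm_Xk_le (c := c) hβl1 hε m' m)
  have hNpos : 0 < transverseNorm c (Xk βl ζ ε m') :=
    hγ.trans_le (apply_one_le_transverseNorm_Xk hβl1 m')
  rw [hN] at hjump ⊢
  have hpq : 4 * ((|m' - m| : ℤ) : ℝ) * ‖Xk βl ζ ε m‖ < ‖Xk βl ζ ε m'‖ := by
    refine lt_of_mul_lt_mul_left ?_ hNpos.le
    have h4 : 0 ≤ 4 * ((|m' - m| : ℤ) : ℝ) * ‖Xk βl ζ ε m‖ * transverseNorm c (Xk βl ζ ε m') :=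
      mul_nonneg (by positivity) hNpos.le
    nlinarith [mul_le_mul_of_nonneg_right hK h4]
  obtain ⟨hsmall, hratio⟩ := lt_and_le_mul_of_four_mul_lt hγ (apply_one_le_norm_Xk hβl1 m) hε
    hR hpq (norm_Xk_le hβlu hε m' m)
  refine ⟨?_, ?_⟩
  · have hinner : ⟪Xk βl ζ ε m, βl⟫ = ⟪ζ, βl⟫ + m * (1 / ε) := by
      simp [Xk, inner_add_left, real_inner_smul_left, hβlu]
      ring
    rw [← hinner, abs_of_pos (one_div_pos.mpr hε)]
    calc |⟪Xk βl ζ ε m, βl⟫| ≤ ‖Xk βl ζ ε m‖ := by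
          simpa [hβlu] using abs_real_inner_le_norm (Xk βl ζ ε m) βl
      _ < 1 / ε / 3 := hsmall
      _ < 1 / ε / 2 := by gcongr; norm_num
  · calc transverseNorm c (Xk βl ζ ε m') * ‖Xk βl ζ ε m'‖
        ≤ transverseNorm c (Xk βl ζ ε m') *
          (4 / 3 * 1 * ((|m' - m| : ℤ) : ℝ) / (ε * ζ 1) * ‖Xk βl ζ ε m‖) :=
          mul_le_mul_of_nonneg_left hratio hNpos.le
      _ = _ := by ring

-- The localisation is read off the coordinate `σ - cη` of `X_m'`, which moves by `b/ε` per step.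
theorem transversal_jump (hβl1 : βl 1 = 0) (hε : 0 < ε) (hγ : 0 < ζ 1) {m m' : ℤ}
    (hR : (1 : ℝ) ≤ ((|m' - m| : ℤ) : ℝ)) {K : ℝ} (hK : 0 < K)
    (hKz : ‖Xk βl ζ ε m'‖ ≤ K * ‖Xk βl ζ ε m‖)
    (hjump : 4 * K * ((|m' - m| : ℤ) : ℝ) * transverseNorm c (Xk βl ζ ε m') * ‖Xk βl ζ ε m‖ <
      transverseNorm c (Xk βl ζ ε m) * ‖Xk βl ζ ε m'‖) :
    |(ζ 0 - c * ζ 2) + m' * ((βl 0 - c * βl 2) / ε)| < |(βl 0 - c * βl 2) / ε| / 2 ∧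
      transverseNorm c (Xk βl ζ ε m) * ‖Xk βl ζ ε m'‖ ≤
        4 / 3 * (K * |βl 0 - c * βl 2|) * ((|m' - m| : ℤ) : ℝ) / (ε * ζ 1) *
          (transverseNorm c (Xk βl ζ ε m') * ‖Xk βl ζ ε m‖) := by
  set b := βl 0 - c * βl 2
  set R := ((|m' - m| : ℤ) : ℝ)
  have ha : 0 < ‖Xk βl ζ ε m‖ := norm_pos_iff.mpr (Xk_mem_Xi hβl1 hγ m).2
  have hNa : 0 ≤ transverseNorm c (Xk βl ζ ε m) := transverseNorm.nonneg _
  have hpq : 4 * R * transverseNorm c (Xk βl ζ ε m') < transverseNorm c (Xk βl ζ ε m) := by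
    refine lt_of_mul_lt_mul_left ?_ (mul_pos hK ha).le
    calc K * ‖Xk βl ζ ε m‖ * (4 * R * transverseNorm c (Xk βl ζ ε m'))
        = 4 * K * R * transverseNorm c (Xk βl ζ ε m') * ‖Xk βl ζ ε m‖ := by ring
      _ < transverseNorm c (Xk βl ζ ε m) * ‖Xk βl ζ ε m'‖ := hjump
      _ ≤ transverseNorm c (Xk βl ζ ε m) * (K * ‖Xk βl ζ ε m‖) :=
          mul_le_mul_of_nonneg_left hKz hNa
      _ = _ := by ring
  have hq := transverseNorm_Xk_le (ζ := ζ) (c := c) hβl1 hε m m'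
  rw [abs_sub_comm m m'] at hq
  have hγz : ζ 1 ≤ transverseNorm c (Xk βl ζ ε m') := apply_one_le_transverseNorm_Xk hβl1 m'
  obtain ⟨hsmall, hratio⟩ := lt_and_le_mul_of_four_mul_lt hγ hγz hε hR hpq hq
  refine ⟨?_, ?_⟩
  · have hcoord : Xk βl ζ ε m' 0 - c * Xk βl ζ ε m' 2 = (ζ 0 - c * ζ 2) + m' * (b / ε) := by
      simp only [Xk, PiLp.add_apply, PiLp.smul_apply, smul_eq_mul, b]
      ring
    have hbε : 0 < |b| / ε := by linarith
    rw [← hcoord, abs_div, abs_of_pos hε]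
    calc |Xk βl ζ ε m' 0 - c * Xk βl ζ ε m' 2| ≤ transverseNorm c (Xk βl ζ ε m') :=
          transverseNorm.abs_sub_mul_le _
      _ < |b| / ε / 3 := hsmall
      _ < |b| / ε / 2 := by gcongr; norm_num
  · calc transverseNorm c (Xk βl ζ ε m) * ‖Xk βl ζ ε m'‖
        ≤ transverseNorm c (Xk βl ζ ε m) * (K * ‖Xk βl ζ ε m‖) :=
          mul_le_mul_of_nonneg_left hKz hNa
      _ ≤ (4 / 3 * |b| * R / (ε * ζ 1) * transverseNorm c (Xk βl ζ ε m')) *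
          (K * ‖Xk βl ζ ε m‖) := mul_le_mul_of_nonneg_right hratio (mul_pos hK ha).le
      _ = _ := by ring

end Orbit

def jumpIndices (βl β ζ : E3) (c ε δ K : ℝ) (k : ℤ → ℤ) : Set ℤ :=
  {j | Xk βl ζ ε (k j) ∈ cone β δ ∧
    4 * K * ((|k j - k (j - 1)| : ℤ) : ℝ) *
        (transverseNorm c (Xk βl ζ ε (k j)) / ‖Xk βl ζ ε (k j)‖) <
      transverseNorm c (Xk βl ζ ε (k (j - 1))) / ‖Xk βl ζ ε (k (j - 1))‖}

theorem jumpIndices_subsingleton_and_le {βl β ζ : E3} {c ε δ K : ℝ} (hβlu : ‖βl‖ = 1)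
    (hβl1 : βl 1 = 0) (hK : 1 ≤ K)
    (hcone : βl 0 - c * βl 2 ≠ 0 → ∀ x ∈ cone β δ, ∀ t : ℝ, ‖x‖ ≤ K * ‖x + t • βl‖)
    (hε : 0 < ε) (hγ : 0 < ζ 1) {k : ℤ → ℤ} (hk : Function.Injective k) :
    (jumpIndices βl β ζ c ε δ K k).Subsingleton ∧
      ∀ j ∈ jumpIndices βl β ζ c ε δ K k,
        transverseNorm c (Xk βl ζ ε (k (j - 1))) / ‖Xk βl ζ ε (k (j - 1))‖ ≤
          4 / 3 * (K * (1 + |βl 0 - c * βl 2|)) * ((|k j - k (j - 1)| : ℤ) : ℝ) / (ε * ζ 1) *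
            (transverseNorm c (Xk βl ζ ε (k j)) / ‖Xk βl ζ ε (k j)‖) := by
  set J := jumpIndices βl β ζ c ε δ K k
  have hnorm : ∀ m, 0 < ‖Xk βl ζ ε m‖ := fun m => norm_pos_iff.mpr (Xk_mem_Xi hβl1 hγ m).2
  have hR : ∀ j, (1 : ℝ) ≤ ((|k j - k (j - 1)| : ℤ) : ℝ) := fun j => by
    exact_mod_cast Int.one_le_abs (sub_ne_zero.mpr (hk.ne (by omega)))
  have hjump : ∀ j ∈ J, 4 * K * ((|k j - k (j - 1)| : ℤ) : ℝ) *
      transverseNorm c (Xk βl ζ ε (k j)) * ‖Xk βl ζ ε (k (j - 1))‖ <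
        transverseNorm c (Xk βl ζ ε (k (j - 1))) * ‖Xk βl ζ ε (k j)‖ := fun j hj => by
    have h := hj.2
    rwa [← mul_div_assoc, div_lt_div_iff₀ (hnorm _) (hnorm _)] at h
  have hprod : ∀ j, 0 ≤ transverseNorm c (Xk βl ζ ε (k j)) * ‖Xk βl ζ ε (k (j - 1))‖ :=
    fun j => mul_nonneg (transverseNorm.nonneg _) (hnorm _).le
  suffices hJ : J.Subsingleton ∧ ∀ j ∈ J,
      transverseNorm c (Xk βl ζ ε (k (j - 1))) * ‖Xk βl ζ ε (k j)‖ ≤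
        4 / 3 * (K * (1 + |βl 0 - c * βl 2|)) * ((|k j - k (j - 1)| : ℤ) : ℝ) / (ε * ζ 1) *
          (transverseNorm c (Xk βl ζ ε (k j)) * ‖Xk βl ζ ε (k (j - 1))‖) by
    refine ⟨hJ.1, fun j hj => ?_⟩
    rw [← mul_div_assoc, div_le_div_iff₀ (hnorm _) (hnorm _), mul_assoc]
    exact hJ.2 j hj
  rcases eq_or_ne (βl 0 - c * βl 2) 0 with hb | hb
  · have key := fun j (hj : j ∈ J) => parallel_jump hβlu hβl1 hb hε hγ (hR j) hK (hjump j hj)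
    refine ⟨((subsingleton_setOf_abs_add_int_mul_lt _ _).preimage
      (hk.comp sub_left_injective)).anti fun j hj => (key j hj).1,
      fun j hj => (key j hj).2.trans ?_⟩
    gcongr
    · exact hprod j
    · nlinarith [abs_nonneg (βl 0 - c * βl 2)]
  · have key := fun j (hj : j ∈ J) => transversal_jump hβl1 hε hγ (hR j) (by linarith)
      (by rw [Xk_eq_add_smul (k (j - 1)) (k j)]; exact hcone hb _ hj.1 _) (hjump j hj)
    refine ⟨((subsingleton_setOf_abs_add_int_mul_lt _ _).preimage hk).anti
      fun j hj => (key j hj).1, fun j hj => (key j hj).2.trans ?_⟩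
    gcongr
    · exact hprod j
    · linarith

/-- Proposition on control of quotients of Lopatinski determinants along admissible sequences
(Proposition `keyt`): along any admissible sequence, for each fixed `(ε, ζ)` the quotient bound
`|Δ(X_{k_{j−1}})| ≤ C₁ |r_j| |Δ(X_{k_j})|` can fail for at most one index `j` with
`X_{k_j} ∈ Γ_δ(β)`, and at such an exceptional index one still has
`|Δ(X_{k_{j−1}})| ≤ (C₂ |r_j|/(εγ)) |Δ(X_{k_j})|`. -/
theorem stmt_5 (βl : E3) (hβlu : ‖βl‖ = 1) (hβl1 : βl 1 = 0)
    (c η₀ : ℝ) (hη₀ : η₀ ≠ 0)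
    (β : E3) (hβ0 : β 0 = c * η₀) (hβ1 : β 1 = 0) (hβ2 : β 2 = η₀) (hβu : ‖β‖ = 1) :
    ∃ δ₀ > (0 : ℝ), ∃ ε₀ > (0 : ℝ),
      ∀ δ : ℝ, 0 < δ → δ ≤ δ₀ →
      ∀ A₁ A₂ : ℝ, 0 < A₁ → A₁ ≤ A₂ →
      ∃ C₁ > (0 : ℝ), ∃ C₂ > (0 : ℝ),
        ∀ Δ : E3 → ℂ,
          (∀ ζ ∈ cone β δ,
              A₁ * (Real.sqrt ((ζ 0 - c * ζ 2) ^ 2 + (ζ 1) ^ 2) / ‖ζ‖) ≤ ‖Δ ζ‖ ∧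
              ‖Δ ζ‖ ≤ A₂ * (Real.sqrt ((ζ 0 - c * ζ 2) ^ 2 + (ζ 1) ^ 2) / ‖ζ‖)) →
          (∀ ζ ∈ Xi \ cone β δ, A₁ ≤ ‖Δ ζ‖ ∧ ‖Δ ζ‖ ≤ A₂) →
          ∀ ε : ℝ, 0 < ε → ε ≤ ε₀ →
          ∀ ζ : E3, ζ ∈ Xi → 0 < ζ 1 →
          ∀ k : ℤ → ℤ, Admissible k →
            Set.Subsingleton {j : ℤ |
                Xk βl ζ ε (k j) ∈ cone β δ ∧
                C₁ * ((|k j - k (j - 1)| : ℤ) : ℝ) * ‖Δ (Xk βl ζ ε (k j))‖ <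
                  ‖Δ (Xk βl ζ ε (k (j - 1)))‖} ∧
            ∀ j ∈ {j : ℤ |
                Xk βl ζ ε (k j) ∈ cone β δ ∧
                C₁ * ((|k j - k (j - 1)| : ℤ) : ℝ) * ‖Δ (Xk βl ζ ε (k j))‖ <
                  ‖Δ (Xk βl ζ ε (k (j - 1)))‖},
              ‖Δ (Xk βl ζ ε (k (j - 1)))‖ ≤
                (C₂ * ((|k j - k (j - 1)| : ℤ) : ℝ) / (ε * ζ 1)) *
                  ‖Δ (Xk βl ζ ε (k j))‖ := by
  obtain ⟨δ₀, hδ₀, hδ₀1, K, hK, hcone⟩ := exists_cone_norm_le_mul_norm_add_smul hβlu hβ0 hβ2 hβu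
  refine ⟨δ₀, hδ₀, 1, one_pos, fun δ hδ hδδ₀ A₁ A₂ hA₁ hA₁₂ => ?_⟩
  have hA₂ : 0 < A₂ := hA₁.trans_le hA₁₂
  set c₁ := A₁ / √(1 + c ^ 2)
  set c₂ := 2 * A₂ / δ ^ 2
  have hc₁ : 0 < c₁ := by positivity
  have hc₂ : 0 < c₂ := by positivity
  refine ⟨c₂ / c₁ * (4 * K), by positivity, c₂ / c₁ * (4 / 3 * (K * (1 + |βl 0 - c * βl 2|))),
    by positivity, fun Δ hin hout ε hε _ ζ _ hγ k hk => ?_⟩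
  have hΔ := fun m => le_norm_and_norm_le_of_cone_bounds hη₀ hβ0 hβ1 hβ2 hβu hδ
    (hδδ₀.trans hδ₀1) hA₁.le hA₂.le hin hout (Xk_mem_Xi (ε := ε) (ζ := ζ) hβl1 hγ m)
  obtain ⟨huniq, hratio⟩ := jumpIndices_subsingleton_and_le (β := β) (δ := δ) hβlu hβl1 hK
    (fun hb x hx => hcone hb δ hδδ₀ x hx) hε hγ (hk.elim StrictMono.injective StrictAnti.injective)
  have hmem : ∀ j, Xk βl ζ ε (k j) ∈ cone β δ →
      c₂ / c₁ * (4 * K) * ((|k j - k (j - 1)| : ℤ) : ℝ) * ‖Δ (Xk βl ζ ε (k j))‖ <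
        ‖Δ (Xk βl ζ ε (k (j - 1)))‖ → j ∈ jumpIndices βl β ζ c ε δ K k := fun j hj hjump =>
    ⟨hj, lt_of_comparable hc₁ hc₂ (hΔ _).1 (hΔ _).2 (by positivity) hjump⟩
  refine ⟨huniq.anti fun j hj => hmem j hj.1 hj.2, fun j hj => ?_⟩
  refine (le_of_comparable hc₁ hc₂ (hΔ _).1 (hΔ _).2 (by positivity)
    (hratio j (hmem j hj.1 hj.2))).trans_eq ?_
  ring
end
end

section
/- For every λ > 0 there exist ε₀ > 0, δ(λ) > 0 and constants C₃ > 0, C₄ > 0, all independent of (ζ, ε, k, r), such that for all δ ∈ (0, δ(λ)], all ε ∈ (0, ε₀], all k ∈ ℤ, all r ∈ ℤ \ {0}, and all ζ ∈ Ξ with X_k ∈ Γ_{δ/|r|}(β_l) and X_{k−r} ∈ Γ_{δ/|r|}(β_l), the following hold, where t := ε ⟨X_{k−r}, β_l⟩: (i) if |t − r Ω| ≥ λ then |E_{i,j}(ε, k, k−r)(ζ)| ≥ C₃ |X_k| / |r| or |E_{i,j}(ε, k, k−r)(ζ)| ≥ C₃ |X_{k−r}|; (ii) if |t − r Ω| <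 λ then |X_k| ≤ C₄ |r| / ε. -/
/-!
Write `Y = X_k`, `Z = X_{k-r} = Y - (r/ε) β_l`, `a = ⟨Z, β_l⟩` and `A = |ω_j(β_l) - ω_i(β_l)|`.
Inside a narrow cone around `±β_l` a vector `v` is `⟨v, β_l⟩ β_l` up to an error `δ|v|`, and
`|v| ≤ 2|⟨v, β_l⟩|`; since the `ω`'s are Lipschitz and homogeneous along `β_l`, the exponent is
therefore its linearisation `(ω_j(β_l) - ω_i(β_l))/ε · (rΩ - εa)` up to `L (δ/|r|)(|Y| + |Z|)`.
The linear term has size `A·D/ε` with `D = |εa - rΩ|`, while `ε|Z| ≤ 2(D + |r||Ω|)` and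
`ε|Y| ≤ ε|Z| + |r|`. If `D ≥ λ` and `δ` is small, the error is at most half the linear term, and
`|E| ≥ A D/(2ε)` is bounded below by `A|Z|/8` when `D ≥ |r||Ω|` and by a multiple of `|Y|/|r|`
otherwise. If `D < λ` the same bounds give `ε|Y| ≤ (2λ + 2|Ω| + 1)|r|`.
-/

noncomputable section

open scoped RealInnerProductSpace

/-- The oscillatory exponent `E_{i,j}(ε, k, k−r)(ζ) := ω_i(X_k) − (r/ε) ω_N(β_l) − ω_j(X_{k−r})`. -/
def Eij (ωi ωj ωN : E3 → ℂ) (βl : E3) (ε : ℝ) (k r : ℤ) (ζ : E3) : ℂ :=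
  ωi (Xk βl ζ ε k) - ((r : ℂ) / (ε : ℂ)) * ωN βl - ωj (Xk βl ζ ε (k - r))

section InnerProductSpace

variable {F : Type*} [NormedAddCommGroup F] [InnerProductSpace ℝ F] {β : F}

theorem norm_sub_smul_sq (hβ : ‖β‖ = 1) (v : F) (t : ℝ) :
    ‖v - t • β‖ ^ 2 = ‖v‖ ^ 2 - 2 * t * ⟪v, β⟫ + t ^ 2 := by
  rw [norm_sub_sq_real, real_inner_smul_right, norm_smul, hβ, Real.norm_eq_abs, mul_one, sq_abs]
  ring

theorem norm_sub_inner_smul_le (hβ : ‖β‖ = 1) (v : F) (t : ℝ) :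
    ‖v - ⟪v, β⟫ • β‖ ≤ ‖v - t • β‖ := by
  rw [← pow_le_pow_iff_left₀ (norm_nonneg _) (norm_nonneg _) two_ne_zero,
    norm_sub_smul_sq hβ, norm_sub_smul_sq hβ]
  nlinarith [sq_nonneg (t - ⟪v, β⟫)]

theorem norm_le_two_mul_abs_inner (hβ : ‖β‖ = 1) {v : F} {s δ : ℝ} (hs : |s| = 1) (hδ : δ ≤ 1)
    (h : ‖v - (s * ‖v‖) • β‖ ≤ δ * ‖v‖) : ‖v‖ ≤ 2 * |⟪v, β⟫| := by
  have hsq : ‖v - (s * ‖v‖) • β‖ ^ 2 ≤ ‖v‖ ^ 2 :=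
    pow_le_pow_left₀ (norm_nonneg _) (h.trans (by nlinarith [norm_nonneg v])) 2
  have hs2 : s ^ 2 = 1 := by rw [← sq_abs, hs, one_pow]
  have hsa : s * ⟪v, β⟫ ≤ |⟪v, β⟫| := by
    simpa [abs_mul, hs] using le_abs_self (s * ⟪v, β⟫)
  rw [norm_sub_smul_sq hβ] at hsq
  rcases (norm_nonneg v).eq_or_lt with h0 | h0
  · rw [← h0]
    positivity
  · nlinarith

end InnerProductSpace

theorem LipschitzWith.norm_sub_ofReal_mul_le {E : Type*} [SeminormedAddCommGroup E] [Module ℝ E]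
    {ω : E → ℂ} {K : NNReal} (hω : LipschitzWith K ω) {β : E}
    (hlin : ∀ s : ℝ, ω (s • β) = s * ω β) (v : E) (t : ℝ) :
    ‖ω v - t * ω β‖ ≤ K * ‖v - t • β‖ := by
  simpa only [dist_eq_norm, hlin] using hω.dist_le_mul v (t • β)

section Cone

variable {β v : E3} {δ : ℝ}

theorem exists_sign_of_mem_cone (hv : v ∈ cone β δ) :
    ∃ s : ℝ, |s| = 1 ∧ ‖v - (s * ‖v‖) • β‖ ≤ δ * ‖v‖ := by
  obtain ⟨⟨-, hv0⟩, hcone⟩ := hv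
  have hn : 0 < ‖v‖ := norm_pos_iff.mpr hv0
  have hscale : ∀ s : ℝ, ‖v - (s * ‖v‖) • β‖ = ‖‖v‖⁻¹ • v - s • β‖ * ‖v‖ := by
    intro s
    rw [mul_comm ‖‖v‖⁻¹ • v - s • β‖, ← norm_smul_of_nonneg hn.le, smul_sub, smul_smul, smul_smul,
      mul_inv_cancel₀ hn.ne', one_smul, mul_comm ‖v‖ s]
  rcases hcone with h | h
  · exact ⟨1, abs_one, by rw [hscale, one_smul]; gcongr⟩
  · exact ⟨-1, by simp, by rw [hscale, neg_one_smul, sub_neg_eq_add]; gcongr⟩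

theorem norm_sub_inner_smul_le_of_mem_cone (hβ : ‖β‖ = 1) (hv : v ∈ cone β δ) :
    ‖v - ⟪v, β⟫ • β‖ ≤ δ * ‖v‖ := by
  obtain ⟨s, -, h⟩ := exists_sign_of_mem_cone hv
  exact (norm_sub_inner_smul_le hβ v _).trans h

theorem norm_le_two_mul_abs_inner_of_mem_cone (hβ : ‖β‖ = 1) (hδ : δ ≤ 1) (hv : v ∈ cone β δ) :
    ‖v‖ ≤ 2 * |⟪v, β⟫| := by
  obtain ⟨s, hs, h⟩ := exists_sign_of_mem_cone hv
  exact norm_le_two_mul_abs_inner hβ hs hδ h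

theorem mul_norm_le_of_mem_cone (hβ : ‖β‖ = 1) (hδ : δ ≤ 1) (hv : v ∈ cone β δ) {ε : ℝ}
    (hε : 0 ≤ ε) (w : ℂ) : ε * ‖v‖ ≤ 2 * (‖((ε * ⟪v, β⟫ : ℝ) : ℂ) - w‖ + ‖w‖) :=
  calc ε * ‖v‖ ≤ ε * (2 * |⟪v, β⟫|) := by
        gcongr
        exact norm_le_two_mul_abs_inner_of_mem_cone hβ hδ hv
    _ = 2 * ‖((ε * ⟪v, β⟫ : ℝ) : ℂ)‖ := by
        rw [Complex.norm_real, Real.norm_eq_abs, abs_mul, abs_of_nonneg hε]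
        ring
    _ ≤ 2 * (‖((ε * ⟪v, β⟫ : ℝ) : ℂ) - w‖ + ‖w‖) := by
        gcongr
        exact norm_le_norm_sub_add _ _

theorem norm_sub_inner_mul_le_of_mem_cone {ω : E3 → ℂ} {K : NNReal} (hω : LipschitzWith K ω)
    (hlin : ∀ s : ℝ, ω (s • β) = s * ω β) (hβ : ‖β‖ = 1) (hv : v ∈ cone β δ) :
    ‖ω v - ⟪v, β⟫ * ω β‖ ≤ K * (δ * ‖v‖) :=
  (hω.norm_sub_ofReal_mul_le hlin v _).trans <|
    mul_le_mul_of_nonneg_left (norm_sub_inner_smul_le_of_mem_cone hβ hv) K.2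

end Cone

section Exponent

variable {βl ζ : E3} {ε : ℝ} {ωi ωj ωN : E3 → ℂ}

theorem inner_Xk (hβ : ‖βl‖ = 1) (k : ℤ) : ⟪Xk βl ζ ε k, βl⟫ = ⟪ζ, βl⟫ + k / ε := by
  rw [Xk, inner_add_left, real_inner_smul_left, real_inner_self_eq_norm_sq, hβ]
  ring

theorem mul_norm_Xk_le (hβ : ‖βl‖ = 1) (hε : 0 < ε) (k r : ℤ) :
    ε * ‖Xk βl ζ ε k‖ ≤ ε * ‖Xk βl ζ ε (k - r)‖ + |(r : ℝ)| := by
  have hshift : Xk βl ζ ε k = Xk βl ζ ε (k - r) + ((r : ℝ) / ε) • βl := by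
    simp only [Xk, add_assoc, ← add_smul]
    push_cast
    ring_nf
  calc ε * ‖Xk βl ζ ε k‖ ≤ ε * (‖Xk βl ζ ε (k - r)‖ + ‖((r : ℝ) / ε) • βl‖) := by
        rw [hshift]
        gcongr
        exact norm_add_le _ _
    _ = ε * ‖Xk βl ζ ε (k - r)‖ + |(r : ℝ)| := by
        rw [norm_smul, hβ, mul_one, Real.norm_eq_abs, abs_div, abs_of_pos hε]
        field_simp

theorem Eij_eq (hβ : ‖βl‖ = 1) (hε : ε ≠ 0) (hne : ωi βl ≠ ωj βl) (k r : ℤ) :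
    Eij ωi ωj ωN βl ε k r ζ =
      (ωj βl - ωi βl) / ε *
          (r * ((ωi βl - ωN βl) / (ωj βl - ωi βl)) - ↑(ε * ⟪Xk βl ζ ε (k - r), βl⟫)) +
        ((ωi (Xk βl ζ ε k) - ⟪Xk βl ζ ε k, βl⟫ * ωi βl) -
          (ωj (Xk βl ζ ε (k - r)) - ⟪Xk βl ζ ε (k - r), βl⟫ * ωj βl)) := by
  have hsub : ωj βl - ωi βl ≠ 0 := sub_ne_zero.mpr hne.symm
  have hε' : (ε : ℂ) ≠ 0 := Complex.ofReal_ne_zero.mpr hε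
  rw [Eij, inner_Xk hβ, inner_Xk hβ]
  push_cast
  field_simp
  ring

theorem norm_Eij_ge (hβ : ‖βl‖ = 1) (hε : 0 < ε) (hne : ωi βl ≠ ωj βl) {K : NNReal}
    (hiLip : LipschitzWith K ωi) (hjLip : LipschitzWith K ωj)
    (hiLin : ∀ s : ℝ, ωi (s • βl) = s * ωi βl) (hjLin : ∀ s : ℝ, ωj (s • βl) = s * ωj βl)
    {k r : ℤ} {δ : ℝ} (hY : Xk βl ζ ε k ∈ cone βl δ) (hZ : Xk βl ζ ε (k - r) ∈ cone βl δ) :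
    ‖ωj βl - ωi βl‖ *
          ‖(↑(ε * ⟪Xk βl ζ ε (k - r), βl⟫) : ℂ) - r * ((ωi βl - ωN βl) / (ωj βl - ωi βl))‖ / ε -
        K * δ * (‖Xk βl ζ ε k‖ + ‖Xk βl ζ ε (k - r)‖) ≤
      ‖Eij ωi ωj ωN βl ε k r ζ‖ := by
  have hi := norm_sub_inner_mul_le_of_mem_cone hiLip hiLin hβ hY
  have hj := norm_sub_inner_mul_le_of_mem_cone hjLip hjLin hβ hZ
  rw [Eij_eq hβ hε.ne' hne]
  refine le_trans ?_ (norm_sub_le_norm_add _ _)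
  rw [norm_mul, norm_div, Complex.norm_real, Real.norm_of_nonneg hε.le, div_mul_eq_mul_div,
    norm_sub_rev ((r : ℂ) * ((ωi βl - ωN βl) / (ωj βl - ωi βl)))]
  refine sub_le_sub_left ((norm_sub_le _ _).trans ?_) _
  calc _ ≤ K * (δ * ‖Xk βl ζ ε k‖) + K * (δ * ‖Xk βl ζ ε (k - r)‖) := add_le_add hi hj
    _ = _ := by ring

end Exponent

section Estimates

variable {A C L M lam δ ε R D y z e : ℝ}

theorem half_le_of_far (hlam : 0 < lam) (hM : 0 ≤ M) (hLδ : 0 ≤ L * δ) (hε : 0 < ε) (hR : 1 ≤ R)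
    (hδ : L * δ * (4 * lam + 4 * M + 1) ≤ A * lam / 2) (hD : lam ≤ D)
    (hz : ε * z ≤ 2 * (D + R * M)) (hy : ε * y ≤ ε * z + R)
    (he : A * D / ε - L * (δ / R) * (y + z) ≤ e) :
    A * D / (2 * ε) ≤ e := by
  have hR0 : 0 < R := one_pos.trans_le hR
  have herr : L * (δ / R) * (y + z) ≤ A * D / (2 * ε) := by
    rw [le_div_iff₀ (by positivity)]
    calc L * (δ / R) * (y + z) * (2 * ε) = 2 * (L * δ) * (ε * (y + z)) / R := by
          field_simp
      _ ≤ 2 * (L * δ) * (4 * D + 4 * R * M + R) / R := by gcongr; linarith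
      _ = 2 * (L * δ) * (4 * (D / R) + 4 * M + 1) := by field_simp
      _ ≤ 2 * (L * δ) * (4 * D + 4 * M + 1) := by
          gcongr
          exact div_le_self (hlam.le.trans hD) hR
      _ ≤ A * D := by
          nlinarith [mul_le_mul_of_nonneg_left hD (by positivity : 0 ≤ L * δ * (4 * M + 1))]
  have hhalf : A * D / ε = 2 * (A * D / (2 * ε)) := by field_simp
  linarith

theorem far_regime_bound (hA : 0 ≤ A) (hε : 0 < ε) (hR : 1 ≤ R) (hC0 : 0 ≤ C)
    (hC : C ≤ A / 8) (hC' : C * (4 * M + 1) ≤ A * lam / 2) (hD : lam ≤ D) (hz0 : 0 ≤ z)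
    (hz : ε * z ≤ 2 * (D + R * M)) (hy : ε * y ≤ ε * z + R) (he : A * D / (2 * ε) ≤ e) :
    C * y / R ≤ e ∨ C * z ≤ e := by
  have hR0 : 0 < R := one_pos.trans_le hR
  rcases le_or_gt (R * M) D with hMD | hMD
  · right
    calc C * z ≤ A / 8 * z := by gcongr
      _ ≤ A * D / (2 * ε) := by
          rw [le_div_iff₀ (by positivity)]
          nlinarith
      _ ≤ e := he
  · left
    have hyM : ε * y ≤ (4 * M + 1) * R := by nlinarith
    calc C * y / R ≤ A * lam / (2 * ε) := by
          rw [div_le_div_iff₀ hR0 (by positivity)]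
          nlinarith [mul_le_mul_of_nonneg_left hyM hC0, mul_le_mul_of_nonneg_right hC' hR0.le]
      _ ≤ A * D / (2 * ε) := by gcongr
      _ ≤ e := he

theorem near_regime_bound (hlam : 0 < lam) (hε : 0 < ε) (hR : 1 ≤ R) (hD : D < lam)
    (hz : ε * z ≤ 2 * (D + R * M)) (hy : ε * y ≤ ε * z + R) :
    y ≤ (2 * lam + 2 * M + 1) * R / ε := by
  rw [le_div_iff₀ hε]
  nlinarith

end Estimates

theorem stmt_6_general (βl : E3) (hβlu : ‖βl‖ = 1)
    (L : ℝ) (hL : 0 < L) (ωi ωj ωN : E3 → ℂ)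
    (hiLip : LipschitzWith (Real.toNNReal L) ωi)
    (hjLip : LipschitzWith (Real.toNNReal L) ωj)
    (hiLin : ∀ s : ℝ, ωi (s • βl) = (s : ℂ) * ωi βl)
    (hjLin : ∀ s : ℝ, ωj (s • βl) = (s : ℂ) * ωj βl)
    (hne : ωi βl ≠ ωj βl)
    (lam : ℝ) (hlam : 0 < lam) :
    ∃ ε₀ > (0 : ℝ), ∃ δlam > (0 : ℝ), ∃ C₃ > (0 : ℝ), ∃ C₄ > (0 : ℝ),
      ∀ δ : ℝ, 0 < δ → δ ≤ δlam →
      ∀ ε : ℝ, 0 < ε → ε ≤ ε₀ →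
      ∀ k r : ℤ, r ≠ 0 →
      ∀ ζ ∈ Xi,
        Xk βl ζ ε k ∈ cone βl (δ / ((|r| : ℤ) : ℝ)) →
        Xk βl ζ ε (k - r) ∈ cone βl (δ / ((|r| : ℤ) : ℝ)) →
        ((lam ≤ Norm.norm ((↑(ε * ⟪Xk βl ζ ε (k - r), βl⟫) : ℂ) -
              (r : ℂ) * ((ωi βl - ωN βl) / (ωj βl - ωi βl))) →
            C₃ * ‖Xk βl ζ ε k‖ / ((|r| : ℤ) : ℝ) ≤ Norm.norm (Eij ωi ωj ωN βl ε k r ζ) ∨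
            C₃ * ‖Xk βl ζ ε (k - r)‖ ≤ Norm.norm (Eij ωi ωj ωN βl ε k r ζ)) ∧
         (Norm.norm ((↑(ε * ⟪Xk βl ζ ε (k - r), βl⟫) : ℂ) -
              (r : ℂ) * ((ωi βl - ωN βl) / (ωj βl - ωi βl))) < lam →
            ‖Xk βl ζ ε k‖ ≤ C₄ * ((|r| : ℤ) : ℝ) / ε)) := by
  set A := ‖ωj βl - ωi βl‖
  set M := ‖(ωi βl - ωN βl) / (ωj βl - ωi βl)‖
  have hA : 0 < A := norm_pos_iff.mpr (sub_ne_zero.mpr hne.symm)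
  have hM : 0 ≤ M := norm_nonneg _
  refine ⟨1, one_pos, min 1 (A * lam / (2 * L * (4 * lam + 4 * M + 1))), by positivity,
    min (A / 8) (A * lam / (2 * (4 * M + 1))), by positivity, 2 * lam + 2 * M + 1, by positivity,
    ?_⟩
  intro δ hδ hδle ε hε _ k r hr ζ _ hY hZ
  simp only [Int.cast_abs] at hY hZ ⊢
  have hR : 1 ≤ |(r : ℝ)| := by exact_mod_cast Int.one_le_abs hr
  have hδ1 : δ ≤ 1 := hδle.trans (min_le_left _ _)
  have hδL : L * δ * (4 * lam + 4 * M + 1) ≤ A * lam / 2 := by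
    have := (le_div_iff₀ (by positivity)).mp (hδle.trans (min_le_right _ _))
    linarith
  have hC : min (A / 8) (A * lam / (2 * (4 * M + 1))) * (4 * M + 1) ≤ A * lam / 2 := by
    have := (le_div_iff₀ (by positivity)).mp (min_le_right (A / 8) (A * lam / (2 * (4 * M + 1))))
    linarith
  have hz := mul_norm_le_of_mem_cone hβlu (div_le_one_of_le₀ (hδ1.trans hR) (abs_nonneg _)) hZ
    hε.le (r * ((ωi βl - ωN βl) / (ωj βl - ωi βl)))
  rw [norm_mul, Complex.norm_intCast] at hz
  have hy := mul_norm_Xk_le hβlu hε (ζ := ζ) k r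
  have he := norm_Eij_ge hβlu hε hne hiLip hjLip hiLin hjLin (ωN := ωN) hY hZ
  rw [Real.coe_toNNReal L hL.le] at he
  exact ⟨fun hD => far_regime_bound hA.le hε hR (by positivity) (min_le_left _ _) hC hD
      (norm_nonneg _) hz hy (half_le_of_far hlam hM (by positivity) hε hR hδL hD hz hy he),
    fun hD => near_regime_bound hlam hε hR hD hz hy⟩

/-- For every `λ > 0` there are `ε₀, δ(λ), C₃, C₄ > 0`, independent of `(ζ, ε, k, r)`, such that
whenever `X_k, X_{k−r} ∈ Γ_{δ/|r|}(β_l)`, setting `t := ε ⟨X_{k−r}, β_l⟩`: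
(i) if `|t − rΩ| ≥ λ` then `|E_{i,j}| ≥ C₃|X_k|/|r|` or `|E_{i,j}| ≥ C₃|X_{k−r}|`;
(ii) if `|t − rΩ| < λ` then `|X_k| ≤ C₄|r|/ε`. -/
theorem stmt_6 (βl : E3) (hβlu : ‖βl‖ = 1) (hβl1 : βl 1 = 0)
    (L : ℝ) (hL : 0 < L) (ωi ωj ωN : E3 → ℂ)
    (hiLip : LipschitzWith (Real.toNNReal L) ωi)
    (hjLip : LipschitzWith (Real.toNNReal L) ωj)
    (hNLip : LipschitzWith (Real.toNNReal L) ωN)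
    (hiLin : ∀ s : ℝ, ωi (s • βl) = (s : ℂ) * ωi βl)
    (hjLin : ∀ s : ℝ, ωj (s • βl) = (s : ℂ) * ωj βl)
    (hNLin : ∀ s : ℝ, ωN (s • βl) = (s : ℂ) * ωN βl)
    (hne : ωi βl ≠ ωj βl)
    (lam : ℝ) (hlam : 0 < lam) :
    ∃ ε₀ > (0 : ℝ), ∃ δlam > (0 : ℝ), ∃ C₃ > (0 : ℝ), ∃ C₄ > (0 : ℝ),
      ∀ δ : ℝ, 0 < δ → δ ≤ δlam →
      ∀ ε : ℝ, 0 < ε → ε ≤ ε₀ →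
      ∀ k r : ℤ, r ≠ 0 →
      ∀ ζ ∈ Xi,
        Xk βl ζ ε k ∈ cone βl (δ / ((|r| : ℤ) : ℝ)) →
        Xk βl ζ ε (k - r) ∈ cone βl (δ / ((|r| : ℤ) : ℝ)) →
        ((lam ≤ Norm.norm ((↑(ε * ⟪Xk βl ζ ε (k - r), βl⟫) : ℂ) -
              (r : ℂ) * ((ωi βl - ωN βl) / (ωj βl - ωi βl))) →
            C₃ * ‖Xk βl ζ ε k‖ / ((|r| : ℤ) : ℝ) ≤ Norm.norm (Eij ωi ωj ωN βl ε k r ζ) ∨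
            C₃ * ‖Xk βl ζ ε (k - r)‖ ≤ Norm.norm (Eij ωi ωj ωN βl ε k r ζ)) ∧
         (Norm.norm ((↑(ε * ⟪Xk βl ζ ε (k - r), βl⟫) : ℂ) -
              (r : ℂ) * ((ωi βl - ωN βl) / (ωj βl - ωi βl))) < lam →
            ‖Xk βl ζ ε k‖ ≤ C₄ * ((|r| : ℤ) : ℝ) / ε)) :=
  stmt_6_general βl hβlu L hL ωi ωj ωN hiLip hjLip hiLin hjLin hne lam hlam

end
end

section
/- There exist ε₀ > 0, δ₀ > 0 and a constant C₃ > 0, all independent of (ζ, ε, k, r), such that for every δ ∈ (0, δ₀], every ε ∈ (0, ε₀], every k ∈ ℤ, every r ∈ ℤ \ {0}, and every ζ ∈ Ξ with X_k ∈ Γ_{δ/|r|}(β_l) and X_{k−r} ∈ Γ_{δ/|r|}(β_l), one has |E_{i,N}(ε, k, k−r)(ζ)| ≥ C₃ |X_k| / |r| or |E_{i,N}(ε, k, k−r)(ζ)| ≥ C₃ |X_{k−r}|. -/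
/-!
Write `X = X_k` and `ρ = r/ε`, so that `X_{k−r} = X − ρ β_l`. Membership of `X` in the cone
gives `s = ±|X|` with `|X − s β_l| ≤ δ |X|`; then also `|X_{k−r} − (s − ρ) β_l| ≤ δ |X|`.
Homogeneity and the Lipschitz bound replace `ω_i(X)` by `s ω_i(β_l)` and `ω_N(X_{k−r})` by
`(s − ρ) ω_N(β_l)`, and the terms `ρ ω_N(β_l)` cancel, leaving
`E = s (ω_i(β_l) − ω_N(β_l)) + O(L δ |X|)`. For `δ` small against `|ω_i(β_l) − ω_N(β_l)| / L`
this gives `|E| ≥ C₃ |X|`.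
-/

noncomputable section

open scoped RealInnerProductSpace

/-- The oscillatory exponent `E_{i,N}(ε, k, k−r)(ζ) := ω_i(X_k) − (r/ε) ω_N(β_l) − ω_N(X_{k−r})`. -/
def EiN (ωi ωN : E3 → ℂ) (βl : E3) (ε : ℝ) (k r : ℤ) (ζ : E3) : ℂ :=
  ωi (Xk βl ζ ε k) - ((r : ℂ) / (ε : ℂ)) * ωN βl - ωN (Xk βl ζ ε (k - r))

open scoped NNReal

section Homogeneous

variable {V : Type*} [NormedAddCommGroup V] [NormedSpace ℝ V]

theorem norm_sub_norm_smul_eq (x β : V) : ‖x - ‖x‖ • β‖ = ‖x‖ * ‖‖x‖⁻¹ • x - β‖ := by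
  rcases eq_or_ne x 0 with rfl | hx
  · simp
  · rw [← norm_norm x, ← norm_smul, smul_sub, norm_norm,
      smul_inv_smul₀ (norm_ne_zero_iff.mpr hx)]

variable {f g : V → ℂ} {K : ℝ≥0} {β : V}

theorem LipschitzWith.norm_sub_ofReal_mul_le_s7 (hf : LipschitzWith K f)
    (hfβ : ∀ s : ℝ, f (s • β) = s * f β) (x : V) (s : ℝ) :
    ‖f x - s * f β‖ ≤ K * ‖x - s • β‖ := by
  simpa only [hfβ, dist_eq_norm] using hf.dist_le_mul x (s • β)

theorem abs_mul_norm_sub_le (hf : LipschitzWith K f) (hg : LipschitzWith K g)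
    (hfβ : ∀ s : ℝ, f (s • β) = s * f β) (hgβ : ∀ s : ℝ, g (s • β) = s * g β)
    (x : V) (s ρ : ℝ) :
    |s| * ‖f β - g β‖ ≤ ‖f x - ρ * g β - g (x - ρ • β)‖ + 2 * K * ‖x - s • β‖ := by
  have hshift : x - ρ • β - (s - ρ) • β = x - s • β := by module
  have hf' := hf.norm_sub_ofReal_mul_le_s7 hfβ x s
  have hg' := hg.norm_sub_ofReal_mul_le_s7 hgβ (x - ρ • β) (s - ρ)
  rw [hshift] at hg'
  have hsplit : (s : ℂ) * (f β - g β) = (f x - ρ * g β - g (x - ρ • β))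
      - (f x - s * f β) + (g (x - ρ • β) - ((s - ρ : ℝ) : ℂ) * g β) := by
    push_cast; ring
  calc |s| * ‖f β - g β‖ = ‖(s : ℂ) * (f β - g β)‖ := by
        rw [norm_mul, Complex.norm_real, Real.norm_eq_abs]
    _ ≤ ‖f x - ρ * g β - g (x - ρ • β)‖ + ‖f x - s * f β‖
          + ‖g (x - ρ • β) - ((s - ρ : ℝ) : ℂ) * g β‖ := by
        rw [hsplit]; exact norm_add_le_of_le (norm_sub_le _ _) le_rfl
    _ ≤ _ := by linarith

end Homogeneous

theorem exists_abs_eq_norm_of_mem_cone {β X : E3} {δ : ℝ} (h : X ∈ cone β δ) :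
    ∃ s : ℝ, |s| = ‖X‖ ∧ ‖X - s • β‖ ≤ δ * ‖X‖ := by
  obtain ⟨-, hβ | hβ⟩ := h
  · refine ⟨‖X‖, abs_norm X, ?_⟩
    rw [norm_sub_norm_smul_eq, mul_comm δ]
    exact mul_le_mul_of_nonneg_left hβ (norm_nonneg X)
  · refine ⟨-‖X‖, by rw [abs_neg, abs_norm], ?_⟩
    rw [neg_smul, ← smul_neg, norm_sub_norm_smul_eq, sub_neg_eq_add, mul_comm δ]
    exact mul_le_mul_of_nonneg_left hβ (norm_nonneg X)

theorem Xk_sub (βl ζ : E3) (ε : ℝ) (k r : ℤ) :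
    Xk βl ζ ε (k - r) = Xk βl ζ ε k - ((r : ℝ) / ε) • βl := by
  simp only [Xk]; push_cast; module

theorem EiN_eq (ωi ωN : E3 → ℂ) (βl : E3) (ε : ℝ) (k r : ℤ) (ζ : E3) :
    EiN ωi ωN βl ε k r ζ = ωi (Xk βl ζ ε k) - (((r : ℝ) / ε : ℝ) : ℂ) * ωN βl
      - ωN (Xk βl ζ ε k - ((r : ℝ) / ε) • βl) := by
  rw [EiN, ← Xk_sub]; push_cast; rfl

theorem stmt_7_general (βl : E3)
    (L : ℝ) (ωi ωN : E3 → ℂ)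
    (hiLip : LipschitzWith (Real.toNNReal L) ωi)
    (hNLip : LipschitzWith (Real.toNNReal L) ωN)
    (hiLin : ∀ s : ℝ, ωi (s • βl) = (s : ℂ) * ωi βl)
    (hNLin : ∀ s : ℝ, ωN (s • βl) = (s : ℂ) * ωN βl)
    (hne : ωi βl ≠ ωN βl) :
    ∃ ε₀ > (0 : ℝ), ∃ δ₀ > (0 : ℝ), ∃ C₃ > (0 : ℝ),
      ∀ δ : ℝ, 0 < δ → δ ≤ δ₀ →
      ∀ ε : ℝ, 0 < ε → ε ≤ ε₀ →
      ∀ k r : ℤ, r ≠ 0 →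
      ∀ ζ ∈ Xi,
        Xk βl ζ ε k ∈ cone βl (δ / ((|r| : ℤ) : ℝ)) →
        Xk βl ζ ε (k - r) ∈ cone βl (δ / ((|r| : ℤ) : ℝ)) →
        (C₃ * ‖Xk βl ζ ε k‖ / ((|r| : ℤ) : ℝ) ≤ ‖EiN ωi ωN βl ε k r ζ‖ ∨
         C₃ * ‖Xk βl ζ ε (k - r)‖ ≤ ‖EiN ωi ωN βl ε k r ζ‖) := by
  set K : ℝ := (Real.toNNReal L : ℝ)
  set d : ℝ := ‖ωi βl - ωN βl‖
  have hd : 0 < d := norm_pos_iff.mpr (sub_ne_zero.mpr hne)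
  refine ⟨1, one_pos, d / (4 * (K + 1)), by positivity, d / 2, by positivity, ?_⟩
  intro δ hδ hδ₀ ε _ _ k r hr ζ _ hX _
  left
  set X := Xk βl ζ ε k
  have hr1 : (1 : ℝ) ≤ ((|r| : ℤ) : ℝ) := by exact_mod_cast Int.one_le_abs hr
  obtain ⟨s, hs, hsX⟩ := exists_abs_eq_norm_of_mem_cone hX
  have hlower := abs_mul_norm_sub_le hiLip hNLip hiLin hNLin X s ((r : ℝ) / ε)
  rw [← EiN_eq, hs] at hlower
  have hδr : δ / ((|r| : ℤ) : ℝ) ≤ d / (4 * (K + 1)) := (div_le_self hδ.le hr1).trans hδ₀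
  have hK : 0 < K + 1 := by positivity
  have hsmall : 2 * K * (d / (4 * (K + 1))) ≤ d / 2 := by
    calc 2 * K * (d / (4 * (K + 1))) ≤ 2 * (K + 1) * (d / (4 * (K + 1))) := by gcongr; linarith
      _ = d / 2 := by field_simp; ring
  have herr : 2 * K * ‖X - s • βl‖ ≤ d / 2 * ‖X‖ :=
    calc 2 * K * ‖X - s • βl‖ ≤ 2 * K * (d / (4 * (K + 1)) * ‖X‖) := by
          gcongr; exact hsX.trans (mul_le_mul_of_nonneg_right hδr (norm_nonneg X))
      _ ≤ d / 2 * ‖X‖ := by rw [← mul_assoc]; gcongr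
  calc d / 2 * ‖X‖ / ((|r| : ℤ) : ℝ) ≤ d / 2 * ‖X‖ := div_le_self (by positivity) hr1
    _ ≤ ‖EiN ωi ωN βl ε k r ζ‖ := by linarith

/-- The good case `j = N` (where `Ω_{i,N} = −1`): there are `ε₀, δ₀, C₃ > 0`, independent of
`(ζ, ε, k, r)`, such that whenever `X_k, X_{k−r} ∈ Γ_{δ/|r|}(β_l)`, one has
`|E_{i,N}| ≥ C₃|X_k|/|r|` or `|E_{i,N}| ≥ C₃|X_{k−r}|`. -/
theorem stmt_7 (βl : E3) (hβlu : ‖βl‖ = 1) (hβl1 : βl 1 = 0)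
    (L : ℝ) (hL : 0 < L) (ωi ωN : E3 → ℂ)
    (hiLip : LipschitzWith (Real.toNNReal L) ωi)
    (hNLip : LipschitzWith (Real.toNNReal L) ωN)
    (hiLin : ∀ s : ℝ, ωi (s • βl) = (s : ℂ) * ωi βl)
    (hNLin : ∀ s : ℝ, ωN (s • βl) = (s : ℂ) * ωN βl)
    (hne : ωi βl ≠ ωN βl) :
    ∃ ε₀ > (0 : ℝ), ∃ δ₀ > (0 : ℝ), ∃ C₃ > (0 : ℝ),
      ∀ δ : ℝ, 0 < δ → δ ≤ δ₀ →
      ∀ ε : ℝ, 0 < ε → ε ≤ ε₀ →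
      ∀ k r : ℤ, r ≠ 0 →
      ∀ ζ ∈ Xi,
        Xk βl ζ ε k ∈ cone βl (δ / ((|r| : ℤ) : ℝ)) →
        Xk βl ζ ε (k - r) ∈ cone βl (δ / ((|r| : ℤ) : ℝ)) →
        (C₃ * ‖Xk βl ζ ε k‖ / ((|r| : ℤ) : ℝ) ≤ ‖EiN ωi ωN βl ε k r ζ‖ ∨
         C₃ * ‖Xk βl ζ ε (k - r)‖ ≤ ‖EiN ωi ωN βl ε k r ζ‖) :=
  stmt_7_general βl L ωi ωN hiLip hNLip hiLin hNLin hne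

end
end

section
/- Let Ω ∈ ℝ with −1 < Ω < 0 and set λ := (1/3) · min(Ω + 1, −Ω) > 0. Let (k_p)_{p∈ℤ} be a strictly increasing sequence of integers with step sizes r_p := k_p − k_{p−1}, and let s ∈ ℝ. Then the set {p ∈ ℤ : |s + k_{p−1} − r_p Ω| < λ} contains at most one element. -/
/-- Let `Ω ∈ (−1, 0)` and `λ := (1/3) min(Ω+1, −Ω)`.  For any strictly increasing integer
sequence `(k_p)` with steps `r_p := k_p − k_{p−1}` and any `s ∈ ℝ`, the set
`{p : |s + k_{p−1} − r_p Ω| < λ}` contains at most one element. -/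
theorem stmt_8 (Ω : ℝ) (h1 : -1 < Ω) (h2 : Ω < 0)
    (k : ℤ → ℤ) (hk : StrictMono k) (s : ℝ) :
    Set.Subsingleton {p : ℤ |
      |s + ((k (p - 1) : ℤ) : ℝ) - ((k p - k (p - 1) : ℤ) : ℝ) * Ω| <
        (1 / 3) * min (Ω + 1) (-Ω)} := by
  intro p hp q hq
  simp only [Set.mem_setOf_eq] at hp hq
  by_contra hne
  wlog hlt : p < q generalizing p q
  · exact this hq hp (Ne.symm hne) (lt_of_le_of_ne (not_lt.mp hlt) (Ne.symm hne))
  have hmono : Monotone (fun n : ℤ => k n - n) := by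
    apply monotone_int_of_le_succ
    intro n
    have := hk (lt_add_one n)
    show k n - n ≤ k (n+1) - (n+1)
    omega
  have h1q : (1:ℤ) ≤ k (q-1) - k (p-1) := by
    have : k (p-1) - (p-1) ≤ k (q-1) - (q-1) := hmono (show p-1 ≤ q-1 by omega)
    omega
  have h2q : (1:ℤ) ≤ k q - k p := by
    have := hk hlt; omega
  have hlam : (1/3 : ℝ) * min (Ω + 1) (-Ω) < 1/3 := by
    have h := min_le_right (Ω+1) (-Ω)
    nlinarith
  have hm : (1:ℝ) ≤ ((k (q-1) - k (p-1) : ℤ) : ℝ) := by exact_mod_cast h1q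
  have hn : (1:ℝ) ≤ ((k q - k p : ℤ) : ℝ) := by exact_mod_cast h2q
  have hprod : (1:ℝ) ≤ ((k (q-1) - k (p-1) : ℤ) : ℝ) * (Ω+1)
      + ((k q - k p : ℤ) : ℝ) * (-Ω) := by nlinarith
  have hd : (s + ((k (q - 1) : ℤ) : ℝ) - ((k q - k (q - 1) : ℤ) : ℝ) * Ω)
      - (s + ((k (p - 1) : ℤ) : ℝ) - ((k p - k (p - 1) : ℤ) : ℝ) * Ω)
      = ((k (q-1) - k (p-1) : ℤ) : ℝ) * (Ω+1) + ((k q - k p : ℤ) : ℝ) * (-Ω) := by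
    push_cast
    ring
  obtain ⟨hp1, hp2⟩ := abs_lt.mp hp
  obtain ⟨hq1, hq2⟩ := abs_lt.mp hq
  linarith
end

section
/- There exist δ₀ ∈ (0, 1), a positive integer N₁⁰, and a constant C > 0 such that for all δ ∈ (0, δ₀], all integers N₁ ≥ N₁⁰, all ε > 0, all ζ ∈ Ξ, all k ∈ ℤ and all r ∈ ℤ \ {0}: if X_k ∈ Γ_{δ/(N₁|r|)}(β_l) and X_{k−r} ∉ Γ_{δ/|r|}(β_l), then |X_{k−r}| ≤ (C/N₁) · |X_k|. -/
noncomputable section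

open scoped RealInnerProductSpace

private lemma aux_normsq (β : E3) (hβ : ‖β‖ = 1) (v : E3) (c : ℝ) :
    ‖v - c • β‖ ^ 2 = ‖v‖ ^ 2 - 2 * c * ⟪v, β⟫ + c ^ 2 := by
  rw [@norm_sub_sq_real, real_inner_smul_right, norm_smul]
  simp [hβ, mul_pow]
  ring

private lemma aux_V1 (β v : E3) (hβ : ‖β‖ = 1) (hv : v ≠ 0) (d : ℝ)
    (h : ‖‖v‖⁻¹ • v - β‖ ≤ d) :
    2 * ‖v‖^2 - 2 * ‖v‖ * ⟪v, β⟫ ≤ d^2 * ‖v‖^2 := by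
  have ha : 0 < ‖v‖ := norm_pos_iff.mpr hv
  have e1 : ‖v‖⁻¹ • v - β = ‖v‖⁻¹ • (v - ‖v‖ • β) := by
    rw [smul_sub, smul_smul, inv_mul_cancel₀ ha.ne', one_smul]
  rw [e1, norm_smul, Real.norm_eq_abs, abs_inv, abs_of_pos ha, inv_mul_le_iff₀ ha] at h
  have h2 : ‖v - ‖v‖ • β‖^2 ≤ (‖v‖ * d)^2 := pow_le_pow_left₀ (norm_nonneg _) h 2
  rw [aux_normsq β hβ v ‖v‖] at h2
  nlinarith [h2]

private lemma aux_V2 (β v : E3) (hβ : ‖β‖ = 1) (hv : v ≠ 0) (d : ℝ) (hd : 0 ≤ d)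
    (h : d < ‖‖v‖⁻¹ • v - β‖) :
    d^2 * ‖v‖^2 < 2 * ‖v‖^2 - 2 * ‖v‖ * ⟪v, β⟫ := by
  have ha : 0 < ‖v‖ := norm_pos_iff.mpr hv
  have e1 : ‖v‖⁻¹ • v - β = ‖v‖⁻¹ • (v - ‖v‖ • β) := by
    rw [smul_sub, smul_smul, inv_mul_cancel₀ ha.ne', one_smul]
  rw [e1, norm_smul, Real.norm_eq_abs, abs_inv, abs_of_pos ha, lt_inv_mul_iff₀ ha] at h
  have h2 : (‖v‖ * d)^2 < ‖v - ‖v‖ • β‖^2 :=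
    pow_lt_pow_left₀ h (by positivity) (by norm_num)
  rw [aux_normsq β hβ v ‖v‖] at h2
  nlinarith [h2]

private lemma aux_scalar (a b cX cY d1 d2 N : ℝ)
    (ha : 0 < a) (hb : 0 < b) (hd10 : 0 < d1) (hd20 : 0 < d2)
    (hd12 : d2 = N * d1) (hN : 1 ≤ N)
    (hCSX : |cX| ≤ a)
    (hkey : b^2 - cY^2 = a^2 - cX^2)
    (hX : 2*a^2 - 2*a*cX ≤ d1^2*a^2 ∨ 2*a^2 + 2*a*cX ≤ d1^2*a^2)
    (h4m : d2^2*b^2 < 2*b^2 - 2*b*cY)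
    (h4p : d2^2*b^2 < 2*b^2 + 2*b*cY) :
    b ≤ 2 / N * a := by
  have hN0 : (0:ℝ) < N := lt_of_lt_of_le one_pos hN
  have hXsq : a^2 - cX^2 ≤ d1^2 * a^2 := by
    rcases hX with h | h
    · nlinarith [sq_nonneg (a - cX), abs_le.mp hCSX, h]
    · nlinarith [sq_nonneg (a + cX), abs_le.mp hCSX, h]
  have hYsq : d2^2*b^2/2 < b^2 - cY^2 := by
    rcases le_total 0 cY with hc | hc
    · nlinarith [mul_nonneg hc (by nlinarith [h4m, mul_pos hd20 hd20, mul_pos hb hb] : (0:ℝ) ≤ b - cY), h4m, hb]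
    · nlinarith [mul_nonneg (neg_nonneg.mpr hc) (by nlinarith [h4p, mul_pos hd20 hd20, mul_pos hb hb] : (0:ℝ) ≤ b + cY), h4p, hb]
  have h5 : d2^2 * b^2 / 2 < d1^2 * a^2 := by
    calc d2^2*b^2/2 < b^2 - cY^2 := hYsq
    _ = a^2 - cX^2 := hkey
    _ ≤ d1^2 * a^2 := hXsq
  have h6 : N^2 * b^2 < 2 * a^2 := by
    rw [hd12] at h5
    have hd1sq : 0 < d1^2 := by positivity
    nlinarith [h5, hd1sq]
  have hNb : N * b ≤ 2 * a := by
    nlinarith [h6, mul_pos hN0 hb, ha, sq_nonneg (N*b - 2*a)]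
  rw [div_mul_eq_mul_div, le_div_iff₀ hN0]
  linarith [hNb]

private lemma aux_core (βl : E3) (hβlu : ‖βl‖ = 1) (X Y : E3) (m : ℝ)
    (hXY : Y = X - m • βl) (d1 d2 N : ℝ) (hd10 : 0 < d1) (hd20 : 0 < d2)
    (hd12 : d2 = N * d1) (hN : 1 ≤ N)
    (hXne : X ≠ 0) (hYne : Y ≠ 0)
    (hX : ‖‖X‖⁻¹ • X - βl‖ ≤ d1 ∨ ‖‖X‖⁻¹ • X + βl‖ ≤ d1)
    (hm : d2 < ‖‖Y‖⁻¹ • Y - βl‖) (hp : d2 < ‖‖Y‖⁻¹ • Y + βl‖) :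
    ‖Y‖ ≤ 2 / N * ‖X‖ := by
  have ha : 0 < ‖X‖ := norm_pos_iff.mpr hXne
  have hb : 0 < ‖Y‖ := norm_pos_iff.mpr hYne
  have hβn : ‖-βl‖ = 1 := by rw [norm_neg, hβlu]
  have hbb : ⟪βl, βl⟫ = (1:ℝ) := by
    rw [real_inner_self_eq_norm_sq, hβlu]; norm_num
  have hCSX : |⟪X, βl⟫| ≤ ‖X‖ := by
    have := abs_real_inner_le_norm X βl
    rwa [hβlu, mul_one] at this
  have hcYX : ⟪Y, βl⟫ = ⟪X, βl⟫ - m := by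
    rw [hXY, inner_sub_left, real_inner_smul_left, hbb, mul_one]
  have hPeq : Y - ⟪Y, βl⟫ • βl = X - ⟪X, βl⟫ • βl := by
    rw [hcYX, hXY, sub_smul]
    abel
  have hkey : ‖Y‖^2 - ⟪Y, βl⟫^2 = ‖X‖^2 - ⟪X, βl⟫^2 := by
    have h1 := aux_normsq βl hβlu Y ⟪Y, βl⟫
    have h2 := aux_normsq βl hβlu X ⟪X, βl⟫
    rw [hPeq, h2] at h1
    linear_combination -h1
  have hXs : 2*‖X‖^2 - 2*‖X‖*⟪X, βl⟫ ≤ d1^2*‖X‖^2 ∨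
      2*‖X‖^2 + 2*‖X‖*⟪X, βl⟫ ≤ d1^2*‖X‖^2 := by
    rcases hX with h | h
    · exact Or.inl (aux_V1 βl X hβlu hXne d1 h)
    · have h' : ‖‖X‖⁻¹ • X - (-βl)‖ ≤ d1 := by rwa [sub_neg_eq_add]
      have h2 := aux_V1 (-βl) X hβn hXne d1 h'
      rw [inner_neg_right] at h2
      refine Or.inr (by linarith [h2])
  have h4m := aux_V2 βl Y hβlu hYne d2 hd20.le hm
  have h4p : d2^2*‖Y‖^2 < 2*‖Y‖^2 + 2*‖Y‖*⟪Y, βl⟫ := by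
    have h' : d2 < ‖‖Y‖⁻¹ • Y - (-βl)‖ := by rwa [sub_neg_eq_add]
    have h2 := aux_V2 (-βl) Y hβn hYne d2 hd20.le h'
    rw [inner_neg_right] at h2
    linarith [h2]
  exact aux_scalar ‖X‖ ‖Y‖ ⟪X, βl⟫ ⟪Y, βl⟫ d1 d2 N ha hb hd10 hd20 hd12 hN
    hCSX hkey hXs h4m h4p

/-- There exist `δ₀ ∈ (0,1)`, a positive integer `N₁⁰`, and `C > 0` such that for all
`δ ∈ (0, δ₀]`, all integers `N₁ ≥ N₁⁰`, all `ε > 0`, `ζ ∈ Ξ`, `k ∈ ℤ` and `r ∈ ℤ \ {0}`: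
if `X_k ∈ Γ_{δ/(N₁|r|)}(β_l)` and `X_{k−r} ∉ Γ_{δ/|r|}(β_l)`, then
`|X_{k−r}| ≤ (C/N₁) |X_k|`. -/
theorem stmt_10 (βl : E3) (hβlu : ‖βl‖ = 1) (hβl1 : βl 1 = 0) :
    ∃ δ₀ : ℝ, 0 < δ₀ ∧ δ₀ < 1 ∧ ∃ N₁0 : ℕ, 0 < N₁0 ∧ ∃ C > (0 : ℝ),
      ∀ δ : ℝ, 0 < δ → δ ≤ δ₀ →
      ∀ N₁ : ℕ, N₁0 ≤ N₁ →
      ∀ ε : ℝ, 0 < ε →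
      ∀ ζ ∈ Xi, ∀ k r : ℤ, r ≠ 0 →
        Xk βl ζ ε k ∈ cone βl (δ / ((N₁ : ℝ) * ((|r| : ℤ) : ℝ))) →
        Xk βl ζ ε (k - r) ∉ cone βl (δ / ((|r| : ℤ) : ℝ)) →
        ‖Xk βl ζ ε (k - r)‖ ≤ (C / (N₁ : ℝ)) * ‖Xk βl ζ ε k‖ := by
  refine ⟨1/2, by norm_num, by norm_num, 1, one_pos, 2, by norm_num, ?_⟩
  intro δ hδ hδ₀ N₁ hN₁ ε hε ζ hζ k r hr hX hY
  by_cases hY0 : Xk βl ζ ε (k - r) = 0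
  · rw [hY0]
    simp only [norm_zero]
    positivity
  have hρ : (1:ℝ) ≤ ((|r| : ℤ) : ℝ) := by exact_mod_cast Int.one_le_abs hr
  have hρ0 : (0:ℝ) < ((|r| : ℤ) : ℝ) := lt_of_lt_of_le one_pos hρ
  have hN : (1:ℝ) ≤ (N₁:ℝ) := by exact_mod_cast hN₁
  have hN0 : (0:ℝ) < (N₁:ℝ) := lt_of_lt_of_le one_pos hN
  have hYX : Xk βl ζ ε (k - r) = Xk βl ζ ε k - ((r:ℝ)/ε) • βl := by
    simp only [Xk]
    push_cast
    rw [sub_div, sub_smul]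
    abel
  have hYXi : Xk βl ζ ε (k - r) ∈ Xi := by
    refine ⟨?_, hY0⟩
    simp only [Xk, PiLp.add_apply, PiLp.smul_apply, hβl1, smul_eq_mul, mul_zero, add_zero]
    exact hζ.1
  have hnot : ¬(‖‖Xk βl ζ ε (k - r)‖⁻¹ • Xk βl ζ ε (k - r) - βl‖ ≤ δ / ((|r| : ℤ) : ℝ) ∨
      ‖‖Xk βl ζ ε (k - r)‖⁻¹ • Xk βl ζ ε (k - r) + βl‖ ≤ δ / ((|r| : ℤ) : ℝ)) :=
    fun h => hY ⟨hYXi, h⟩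
  push_neg at hnot
  exact aux_core βl hβlu _ _ _ hYX _ _ (N₁:ℝ) (by positivity) (by positivity)
    (by field_simp) hN hX.1.2 hY0 hX.2 hnot.1 hnot.2

end
end

section
/- Let Ω ∈ ℝ, s ∈ ℝ, and let 𝒫 be a finite set of nonzero integers with exactly P elements. Let (k_p)_{p∈ℤ} be a strictly increasing sequence of integers whose step sizes r_p := k_p − k_{p−1} all belong to 𝒫. Then the set {p ∈ ℤ : |s + k_{p−1} − r_p Ω| < 1/2} contains at most P elements. -/
/-- Let `Ω, s ∈ ℝ` and let `P` be a finite set of nonzero integers.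
If `(k_p)` is a strictly increasing integer sequence whose steps `r_p := k_p − k_{p−1}` all
belong to `P`, then the set `{p : |s + k_{p−1} − r_p Ω| < 1/2}` has at most `P.card` elements. -/
theorem stmt_11 (Ω s : ℝ) (P : Finset ℤ) (hP : ∀ x ∈ P, x ≠ 0)
    (k : ℤ → ℤ) (hk : StrictMono k) (hsteps : ∀ p : ℤ, k p - k (p - 1) ∈ P) :
    {p : ℤ |
        |s + ((k (p - 1) : ℤ) : ℝ) - ((k p - k (p - 1) : ℤ) : ℝ) * Ω| < 1 / 2}.encard ≤
      (P.card : ℕ∞) := by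
  set S := {p : ℤ |
      |s + ((k (p - 1) : ℤ) : ℝ) - ((k p - k (p - 1) : ℤ) : ℝ) * Ω| < 1 / 2} with hS
  have hinj : Set.InjOn (fun p => k p - k (p - 1)) S := by
    intro p hp q hq hpq
    simp only at hpq
    have hp' := hp
    have hq' := hq
    simp only [hS, Set.mem_setOf_eq] at hp' hq'
    rw [hpq] at hp'
    obtain ⟨a1, a2⟩ := abs_lt.mp hp'
    obtain ⟨b1, b2⟩ := abs_lt.mp hq'
    have h1 : |((k (p-1) : ℝ)) - ((k (q-1) : ℝ))| < 1 :=
      abs_sub_lt_iff.mpr ⟨by linarith, by linarith⟩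
    have h2 : k (p-1) = k (q-1) := by
      have h3 : |((k (p-1) - k (q-1) : ℤ) : ℝ)| < 1 := by push_cast; exact h1
      have h4 : |(k (p-1) - k (q-1) : ℤ)| < 1 := by exact_mod_cast h3
      obtain ⟨c1, c2⟩ := abs_lt.mp h4
      omega
    have := hk.injective h2
    omega
  calc S.encard = (Set.image (fun p => k p - k (p - 1)) S).encard :=
        (hinj.encard_image).symm
    _ ≤ (↑P : Set ℤ).encard := by
        apply Set.encard_le_encard
        rintro x ⟨p, _, rfl⟩
        exact hsteps p
    _ = (P.card : ℕ∞) := by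
        rw [Set.encard_coe_eq_coe_finsetCard]
end

section
/- Suppose Ω = p/q for positive integers p and q, and let (n_m)_{m≥1} be a sequence of positive integers with n_{m+1} p > n_m (p+q) for all m. Set k_{2m} := n_m (p+q), k_{2m−1} := n_m p, and r_{2m} := k_{2m} − k_{2m−1} = n_m q. Fix 0 < α < 1. Then for every C₃ > 0 and every δ ∈ (0, 1] there exists ε₀ > 0 such that for all ε ∈ (0, ε₀], all ζ ∈ Ξ with |ζ| ≤ ε^{α−1}, and all integers m ≥ 2: X_{k_{2m}} ∈ Γ_{δ/r_{2m}}(β_l), X_{k_{2m−1}} ∈ Γ_{δ/r_{2m}}(β_l), and neither of the inequalities |E_{i,j}(ε, k_{2m}, k_{2m−1})(ζ)| ≥ C₃ |X_{k_{2m}}| / r_{2m} and |E_{i,j}(ε, k_{2m}, k_{2m−1})(ζ)| ≥ C₃ |X_{k_{2m−1}}| holds. -/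
noncomputable section

open scoped RealInnerProductSpace

/-! On the resonance `q (ωᵢ - ω_N) = p (ωⱼ - ωᵢ)` the exponent vanishes identically at `ζ = 0`
for `k = N (p + q)`, `r = N q`, because the `ωₘ` are homogeneous along `β_l`. Hence the Lipschitz
bound gives `ε |E| ≤ 2 L ε |ζ| ≤ 2 L ε^α`, which is small. Meanwhile `ε X_k = ε ζ + k β_l` with
`ε |ζ|` small, so `ε |X_k| ≥ k / 2` and the direction of `X_k` is within `2 |ζ| / |X_k| = O(ε^α / k)`
of `β_l`. Both claimed lower bounds for `|E|` are therefore at least of order `C₃ / ε` and fail. -/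

section NormedSpace

variable {V : Type*} [NormedAddCommGroup V] [NormedSpace ℝ V] {β : V} {s : ℝ}

lemma abs_norm_add_smul_sub_le (hβ : ‖β‖ = 1) (hs : 0 ≤ s) (ζ : V) :
    |‖ζ + s • β‖ - s| ≤ ‖ζ‖ := by
  have hsβ : ‖s • β‖ = s := by rw [norm_smul, hβ, Real.norm_of_nonneg hs, mul_one]
  simpa [hsβ] using abs_norm_sub_norm_le (ζ + s • β) (s • β)

/-- The direction of `ζ + s • β` is within `2 ‖ζ‖ / ‖ζ + s • β‖` of `β`, stated as a product so
that it also holds when `ζ + s • β = 0`. -/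
lemma norm_mul_norm_inv_smul_sub_le (hβ : ‖β‖ = 1) (hs : 0 ≤ s) (ζ : V) :
    ‖ζ + s • β‖ * ‖‖ζ + s • β‖⁻¹ • (ζ + s • β) - β‖ ≤ 2 * ‖ζ‖ := by
  set X := ζ + s • β
  rcases eq_or_ne X 0 with hX | hX
  · simp [hX]
  have hXn : ‖X‖ ≠ 0 := norm_ne_zero_iff.mpr hX
  have hsmul : ‖X‖ • (‖X‖⁻¹ • X - β) = ζ + (s - ‖X‖) • β := by
    rw [smul_sub, smul_smul, mul_inv_cancel₀ hXn, one_smul, sub_smul]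
    simp only [X]
    abel
  calc ‖X‖ * ‖‖X‖⁻¹ • X - β‖ = ‖ζ + (s - ‖X‖) • β‖ := by
        rw [← hsmul, norm_smul, Real.norm_of_nonneg (norm_nonneg X)]
    _ ≤ ‖ζ‖ + |s - ‖X‖| := by
        simpa [norm_smul, hβ] using norm_add_le ζ ((s - ‖X‖) • β)
    _ ≤ 2 * ‖ζ‖ := by
        rw [abs_sub_comm]
        linarith [abs_norm_add_smul_sub_le hβ hs ζ]

end NormedSpace

lemma add_smul_mem_cone {β ζ : E3} {s δ : ℝ} (hβ : ‖β‖ = 1) (hβ1 : β 1 = 0) (hζ : 0 ≤ ζ 1)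
    (hs : 0 ≤ s) (hX : 0 < ‖ζ + s • β‖) (h : 2 * ‖ζ‖ ≤ δ * ‖ζ + s • β‖) :
    ζ + s • β ∈ cone β δ := by
  refine ⟨⟨by simpa [hβ1] using hζ, norm_pos_iff.mp hX⟩, Or.inl ?_⟩
  have := norm_mul_norm_inv_smul_sub_le hβ hs ζ
  rw [← mul_le_mul_iff_of_pos_left hX]
  linarith

section Exponent

variable {βl ζ : E3} {ε : ℝ}

lemma half_le_mul_norm_Xk (hβ : ‖βl‖ = 1) (hε : 0 < ε) {k : ℤ} (hζ : 2 * (ε * ‖ζ‖) ≤ k) :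
    (k : ℝ) / 2 ≤ ε * ‖Xk βl ζ ε k‖ := by
  have hk : 0 ≤ (k : ℝ) / ε := div_nonneg (by nlinarith [norm_nonneg ζ]) hε.le
  have h := abs_le.mp (abs_norm_add_smul_sub_le hβ hk ζ)
  have : ε * (k / ε) = k := mul_div_cancel₀ _ hε.ne'
  unfold Xk
  nlinarith

lemma Xk_mem_cone (hβ : ‖βl‖ = 1) (hβ1 : βl 1 = 0) (hζ : ζ ∈ Xi) (hε : 0 < ε) {k : ℤ}
    {δ : ℝ} (hk : 2 * (ε * ‖ζ‖) ≤ k) (hδ : 4 * (ε * ‖ζ‖) ≤ δ * k) :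
    Xk βl ζ ε k ∈ cone βl δ := by
  have hζ0 : 0 < ε * ‖ζ‖ := mul_pos hε (norm_pos_iff.mpr hζ.2)
  have hk0 : 0 < (k : ℝ) := by linarith
  have hδ0 : 0 ≤ δ := by nlinarith
  have hX := half_le_mul_norm_Xk hβ hε hk
  unfold Xk at hX
  refine add_smul_mem_cone hβ hβ1 hζ.1 (by positivity) (by nlinarith)
    (le_of_mul_le_mul_left ?_ hε)
  nlinarith [mul_le_mul_of_nonneg_left hX hδ0]

lemma two_mul_le_of_mul_le {t δ : ℝ} (ht : 0 ≤ t) (hδ1 : δ ≤ 1) {N p q k : ℕ} (hN : 0 < N)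
    (hq : 0 < q) (ht_le : 4 * q * t ≤ δ * p) (hk : N * p ≤ k) : 2 * t ≤ k := by
  have hNR : (1 : ℝ) ≤ N := by exact_mod_cast hN
  have hqR : (1 : ℝ) ≤ q := by exact_mod_cast hq
  have hkR : (N : ℝ) * p ≤ k := by exact_mod_cast hk
  nlinarith [(p.cast_nonneg : (0 : ℝ) ≤ p)]

lemma Xk_mem_cone_div_mul (hβ : ‖βl‖ = 1) (hβ1 : βl 1 = 0) (hζ : ζ ∈ Xi) (hε : 0 < ε)
    {δ : ℝ} (hδ1 : δ ≤ 1) {N p q k : ℕ} (hN : 0 < N) (hq : 0 < q)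
    (hζp : 4 * q * (ε * ‖ζ‖) ≤ δ * p) (hk : N * p ≤ k) :
    Xk βl ζ ε k ∈ cone βl (δ / ((N * q : ℕ) : ℝ)) := by
  have hζ0 : 0 < ε * ‖ζ‖ := mul_pos hε (norm_pos_iff.mpr hζ.2)
  have hkR : (N : ℝ) * p ≤ k := by exact_mod_cast hk
  have hqR : (1 : ℝ) ≤ q := by exact_mod_cast hq
  have hδ0 : 0 ≤ δ := by nlinarith [(p.cast_nonneg : (0 : ℝ) ≤ p)]
  refine Xk_mem_cone hβ hβ1 hζ hε ?_ ?_ <;> rw [Int.cast_natCast]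
  · exact two_mul_le_of_mul_le hζ0.le hδ1 hN hq hζp hk
  · rw [Nat.cast_mul, div_mul_eq_mul_div, le_div_iff₀ (by positivity)]
    nlinarith [mul_le_mul_of_nonneg_left hkR hδ0, (N.cast_nonneg : (0 : ℝ) ≤ N)]

lemma lt_mul_norm_Xk_div (hβ : ‖βl‖ = 1) (hε : 0 < ε) {k : ℕ} (hζ : 2 * (ε * ‖ζ‖) ≤ k)
    {R e C : ℝ} (hR : 0 < R) (hRk : R ≤ k) (hC : 0 ≤ C) (he : ε * e < C / 2) :
    e < C * ‖Xk βl ζ ε k‖ / R := by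
  have hX := half_le_mul_norm_Xk hβ hε (k := k) (by rwa [Int.cast_natCast])
  rw [Int.cast_natCast] at hX
  rw [lt_div_iff₀ hR]
  refine lt_of_mul_lt_mul_left ?_ hε.le
  nlinarith [mul_le_mul_of_nonneg_left hX hC]

end Exponent

section Resonance

variable {ωi ωj ωN : E3 → ℂ} {βl ζ : E3} {ε : ℝ} {k r : ℤ}

/-- On the resonance `r (ωᵢ - ω_N) = (k - r) (ωⱼ - ωᵢ)` the exponent vanishes at `ζ = 0`, so it
is a sum of two increments of `ωᵢ` and `ωⱼ` over the displacement `ζ`. -/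
lemma Eij_eq_of_resonance
    (hiLin : ∀ s : ℝ, ωi (s • βl) = (s : ℂ) * ωi βl)
    (hjLin : ∀ s : ℝ, ωj (s • βl) = (s : ℂ) * ωj βl)
    (hres : (r : ℂ) * (ωi βl - ωN βl) = ((k - r : ℤ) : ℂ) * (ωj βl - ωi βl)) :
    Eij ωi ωj ωN βl ε k r ζ = (ωi (Xk βl ζ ε k) - ωi (Xk βl 0 ε k)) -
      (ωj (Xk βl ζ ε (k - r)) - ωj (Xk βl 0 ε (k - r))) := by
  simp only [Eij, Xk, zero_add, hiLin, hjLin]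
  push_cast at hres ⊢
  linear_combination (ε : ℂ)⁻¹ * hres

lemma norm_Eij_le_of_resonance {K : NNReal} (hiLip : LipschitzWith K ωi)
    (hjLip : LipschitzWith K ωj)
    (hiLin : ∀ s : ℝ, ωi (s • βl) = (s : ℂ) * ωi βl)
    (hjLin : ∀ s : ℝ, ωj (s • βl) = (s : ℂ) * ωj βl)
    (hres : (r : ℂ) * (ωi βl - ωN βl) = ((k - r : ℤ) : ℂ) * (ωj βl - ωi βl)) :
    ‖Eij ωi ωj ωN βl ε k r ζ‖ ≤ 2 * K * ‖ζ‖ := by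
  have hsub (k : ℤ) : Xk βl ζ ε k - Xk βl 0 ε k = ζ := by simp [Xk]
  rw [Eij_eq_of_resonance hiLin hjLin hres]
  calc _ ≤ ‖ωi (Xk βl ζ ε k) - ωi (Xk βl 0 ε k)‖
          + ‖ωj (Xk βl ζ ε (k - r)) - ωj (Xk βl 0 ε (k - r))‖ := norm_sub_le _ _
    _ ≤ K * ‖ζ‖ + K * ‖ζ‖ := by
        gcongr
        · simpa [hsub] using hiLip.norm_sub_le (Xk βl ζ ε k) (Xk βl 0 ε k)
        · simpa [hsub] using hjLip.norm_sub_le (Xk βl ζ ε (k - r)) (Xk βl 0 ε (k - r))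
    _ = 2 * K * ‖ζ‖ := by ring

end Resonance

open Filter Topology in
lemma exists_pos_mul_lt_and_mul_lt {a c : ℝ} (ha : 0 < a) (hc : 0 < c) (b d : ℝ) :
    ∃ x > 0, b * x < a ∧ d * x < c := by
  have small (a b : ℝ) (ha : 0 < a) : ∀ᶠ x in 𝓝[>] (0 : ℝ), b * x < a :=
    nhdsWithin_le_nhds (((continuous_const_mul b).tendsto' 0 0 (mul_zero b)).eventually_lt_const ha)
  obtain ⟨x, ⟨hxa, hxc⟩, hx⟩ := (((small a b ha).and (small c d hc)).and self_mem_nhdsWithin).exists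
  exact ⟨x, hx, hxa, hxc⟩

lemma mul_le_of_le_rpow_inv {α A ε x : ℝ} (hα : 0 < α) (hA : 0 ≤ A) (hε : 0 < ε)
    (hεA : ε ≤ A ^ α⁻¹) (hx : x ≤ ε ^ (α - 1)) : ε * x ≤ A :=
  calc ε * x ≤ ε * ε ^ (α - 1) := by gcongr
    _ = ε ^ α := by rw [Real.rpow_sub_one hε.ne', mul_div_cancel₀ _ hε.ne']
    _ ≤ A := (Real.le_rpow_inv_iff_of_pos hε.le hA hα).mp hεA

theorem stmt_13_general (βl : E3) (hβlu : ‖βl‖ = 1) (hβl1 : βl 1 = 0)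
    (L : ℝ) (ωi ωj ωN : E3 → ℂ)
    (hiLip : LipschitzWith (Real.toNNReal L) ωi)
    (hjLip : LipschitzWith (Real.toNNReal L) ωj)
    (hiLin : ∀ s : ℝ, ωi (s • βl) = (s : ℂ) * ωi βl)
    (hjLin : ∀ s : ℝ, ωj (s • βl) = (s : ℂ) * ωj βl)
    (hne : ωi βl ≠ ωj βl)
    (p q : ℕ) (hp : 0 < p) (hq : 0 < q)
    (hΩ : (ωi βl - ωN βl) / (ωj βl - ωi βl) = (p : ℂ) / (q : ℂ))
    (n : ℕ → ℕ) (hn : ∀ m : ℕ, 1 ≤ m → 0 < n m)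
    (α : ℝ) (hα0 : 0 < α) :
    ∀ C₃ : ℝ, 0 < C₃ → ∀ δ : ℝ, 0 < δ → δ ≤ 1 →
    ∃ ε₀ > (0 : ℝ), ∀ ε : ℝ, 0 < ε → ε ≤ ε₀ →
    ∀ ζ ∈ Xi, ‖ζ‖ ≤ ε ^ (α - 1) →
    ∀ m : ℕ, 2 ≤ m →
      Xk βl ζ ε ((n m * (p + q) : ℕ) : ℤ) ∈ cone βl (δ / ((n m * q : ℕ) : ℝ)) ∧
      Xk βl ζ ε ((n m * p : ℕ) : ℤ) ∈ cone βl (δ / ((n m * q : ℕ) : ℝ)) ∧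
      ¬ (C₃ * ‖Xk βl ζ ε ((n m * (p + q) : ℕ) : ℤ)‖ / ((n m * q : ℕ) : ℝ) ≤
          ‖Eij ωi ωj ωN βl ε ((n m * (p + q) : ℕ) : ℤ) ((n m * q : ℕ) : ℤ) ζ‖) ∧
      ¬ (C₃ * ‖Xk βl ζ ε ((n m * p : ℕ) : ℤ)‖ ≤
          ‖Eij ωi ωj ωN βl ε ((n m * (p + q) : ℕ) : ℤ) ((n m * q : ℕ) : ℤ) ζ‖) := by
  intro C₃ hC₃ δ hδ hδ1
  have hres : (q : ℂ) * (ωi βl - ωN βl) = p * (ωj βl - ωi βl) := by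
    rw [div_eq_div_iff (sub_ne_zero.mpr hne.symm) (by exact_mod_cast hq.ne')] at hΩ
    linear_combination hΩ
  obtain ⟨A, hA0, hA_cone, hA_E⟩ :=
    exists_pos_mul_lt_and_mul_lt (mul_pos hδ (Nat.cast_pos.mpr hp)) hC₃ (4 * q) (4 * L.toNNReal)
  refine ⟨A ^ α⁻¹, by positivity, fun ε hε hεA ζ hζ hζε m hm => ?_⟩
  have hεζ : ε * ‖ζ‖ ≤ A := mul_le_of_le_rpow_inv hα0 hA0.le hε hεA hζε
  have hN : 0 < n m := hn m (by omega)
  have hζp : 4 * q * (ε * ‖ζ‖) ≤ δ * p := by nlinarith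
  have hζ0 : 0 ≤ ε * ‖ζ‖ := by positivity
  have hE : ε * ‖Eij ωi ωj ωN βl ε ((n m * (p + q) : ℕ) : ℤ) ((n m * q : ℕ) : ℤ) ζ‖ < C₃ / 2 := by
    have := norm_Eij_le_of_resonance (ωN := ωN) (ε := ε) (ζ := ζ) hiLip hjLip hiLin hjLin
      (k := ((n m * (p + q) : ℕ) : ℤ)) (r := ((n m * q : ℕ) : ℤ))
      (by push_cast; linear_combination (n m : ℂ) * hres)
    nlinarith [mul_le_mul_of_nonneg_left this hε.le, NNReal.coe_nonneg L.toNNReal]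
  have hk : n m * p ≤ n m * (p + q) := by gcongr; omega
  refine ⟨Xk_mem_cone_div_mul hβlu hβl1 hζ hε hδ1 hN hq hζp hk,
    Xk_mem_cone_div_mul hβlu hβl1 hζ hε hδ1 hN hq hζp le_rfl,
    not_le.mpr (lt_mul_norm_Xk_div hβlu hε (two_mul_le_of_mul_le hζ0 hδ1 hN hq hζp hk)
      (by positivity) (by gcongr; omega) hC₃.le hE),
    not_le.mpr ?_⟩
  simpa only [div_one] using lt_mul_norm_Xk_div hβlu hε
    (two_mul_le_of_mul_le hζ0 hδ1 hN hq hζp le_rfl) one_pos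
    (by exact_mod_cast Nat.mul_pos hN hp) hC₃.le hE

/-- Failure of the oscillatory-exponent lower bounds along resonant sequences: if `Ω = p/q`
with `p, q` positive integers and `k_{2m} := n_m(p+q)`, `k_{2m−1} := n_m p`,
`r_{2m} := n_m q`, then for every `C₃ > 0` and `δ ∈ (0,1]` there is `ε₀ > 0` such that for
all `ε ∈ (0, ε₀]`, all `ζ ∈ Ξ` with `|ζ| ≤ ε^{α−1}`, and all `m ≥ 2`:
`X_{k_{2m}}, X_{k_{2m−1}} ∈ Γ_{δ/r_{2m}}(β_l)`, and neither
`|E_{i,j}| ≥ C₃ |X_{k_{2m}}|/r_{2m}` nor `|E_{i,j}| ≥ C₃ |X_{k_{2m−1}}|` holds. -/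
theorem stmt_13 (βl : E3) (hβlu : ‖βl‖ = 1) (hβl1 : βl 1 = 0)
    (L : ℝ) (hL : 0 < L) (ωi ωj ωN : E3 → ℂ)
    (hiLip : LipschitzWith (Real.toNNReal L) ωi)
    (hjLip : LipschitzWith (Real.toNNReal L) ωj)
    (hNLip : LipschitzWith (Real.toNNReal L) ωN)
    (hiLin : ∀ s : ℝ, ωi (s • βl) = (s : ℂ) * ωi βl)
    (hjLin : ∀ s : ℝ, ωj (s • βl) = (s : ℂ) * ωj βl)
    (hNLin : ∀ s : ℝ, ωN (s • βl) = (s : ℂ) * ωN βl)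
    (hne : ωi βl ≠ ωj βl)
    (p q : ℕ) (hp : 0 < p) (hq : 0 < q)
    (hΩ : (ωi βl - ωN βl) / (ωj βl - ωi βl) = (p : ℂ) / (q : ℂ))
    (n : ℕ → ℕ) (hn : ∀ m : ℕ, 1 ≤ m → 0 < n m)
    (hsep : ∀ m : ℕ, 1 ≤ m → n m * (p + q) < n (m + 1) * p)
    (α : ℝ) (hα0 : 0 < α) (hα1 : α < 1) :
    ∀ C₃ : ℝ, 0 < C₃ → ∀ δ : ℝ, 0 < δ → δ ≤ 1 →
    ∃ ε₀ > (0 : ℝ), ∀ ε : ℝ, 0 < ε → ε ≤ ε₀ →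
    ∀ ζ ∈ Xi, ‖ζ‖ ≤ ε ^ (α - 1) →
    ∀ m : ℕ, 2 ≤ m →
      Xk βl ζ ε ((n m * (p + q) : ℕ) : ℤ) ∈ cone βl (δ / ((n m * q : ℕ) : ℝ)) ∧
      Xk βl ζ ε ((n m * p : ℕ) : ℤ) ∈ cone βl (δ / ((n m * q : ℕ) : ℝ)) ∧
      ¬ (C₃ * ‖Xk βl ζ ε ((n m * (p + q) : ℕ) : ℤ)‖ / ((n m * q : ℕ) : ℝ) ≤
          ‖Eij ωi ωj ωN βl ε ((n m * (p + q) : ℕ) : ℤ) ((n m * q : ℕ) : ℤ) ζ‖) ∧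
      ¬ (C₃ * ‖Xk βl ζ ε ((n m * p : ℕ) : ℤ)‖ ≤
          ‖Eij ωi ωj ωN βl ε ((n m * (p + q) : ℕ) : ℤ) ((n m * q : ℕ) : ℤ) ζ‖) :=
  stmt_13_general βl hβlu hβl1 L ωi ωj ωN hiLip hjLip hiLin hjLin hne p q hp hq hΩ n hn α hα0

end
end

section
/- Let M ≥ 2 and A, C, C' > 0, and let (α_r)_{r∈ℤ} be nonnegative real numbers with α₀ = 1 and α_r ≤ A |r|^{−(M+1)} for all r ≠ 0. Let (a_k)_{k∈ℤ} and (b_k)_{k∈ℤ} be nonnegative square-summable sequences, and suppose that for some γ > 0 and all k ∈ ℤ: a_k ≤ (C'/γ) · Σ_{r∈ℤ\{0}} Σ_{t∈ℤ} α_r · α_t · (C |r|) · a_{k−r−t} + b_k. Then there exists γ₀ > 0, depending only on A, M, C and C', such that whenever γ ≥ γ₀ one has (Σ_{k∈ℤ} a_k²)^{1/2} ≤ 2 · (Σ_{k∈ℤ} b_k²)^{1/2}. -/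
/-!
The double sum is the convolution of `a` with the nonnegative kernel
`K (r, t) = α r * C |r| * α t` (`r ≠ 0`) on `ℤ × ℤ`, acting through the shift `r + t`.
The decay of `α` bounds its mass by `C A Z(M) (1 + A Z(M + 1))`, where `Z(s) = ∑ |r|^(-s)`
(the term `r = 0` vanishes since `0 ^ (-s) = 0`).
Young's inequality then gives `‖a‖₂ ≤ (C'/γ) ‖K‖₁ ‖a‖₂ + ‖b‖₂`, and for
`γ ≥ 2 C' C A Z(M) (1 + A Z(M + 1))` the first term is absorbed into the left-hand side.
-/

section CauchySchwarz

variable {ι : Type*} {F x : ι → ℝ}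

theorem summable_mul_of_summable_mul_sq (hF0 : ∀ i, 0 ≤ F i) (hF : Summable F)
    (hFx : Summable fun i => F i * x i ^ 2) : Summable fun i => F i * x i :=
  .of_norm_bounded ((hF.add hFx).div_const 2) fun i => by
    rw [Real.norm_eq_abs, abs_mul, abs_of_nonneg (hF0 i)]
    have h := two_mul_le_add_sq |x i| 1
    rw [sq_abs] at h
    nlinarith [mul_le_mul_of_nonneg_left h (hF0 i)]

theorem sq_tsum_mul_le_tsum_mul_tsum_mul_sq (hF0 : ∀ i, 0 ≤ F i) (hF : Summable F)
    (hFx : Summable fun i => F i * x i ^ 2) :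
    (∑' i, F i * x i) ^ 2 ≤ (∑' i, F i) * ∑' i, F i * x i ^ 2 :=
  le_of_tendsto_of_tendsto'
    (Filter.Tendsto.pow (summable_mul_of_summable_mul_sq hF0 hF hFx).hasSum 2)
    (Filter.Tendsto.mul hF.hasSum hFx.hasSum) fun s =>
      s.sum_sq_le_sum_mul_sum_of_sq_le_mul (fun i _ => hF0 i)
        (fun i _ => mul_nonneg (hF0 i) (sq_nonneg _)) fun i _ => le_of_eq (by ring)

end CauchySchwarz

section Young

variable {ι G : Type*} [AddGroup G] {F : ι → ℝ} {a : G → ℝ}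

theorem summable_mul_sq_comp_sub (hF0 : ∀ i, 0 ≤ F i) (hF : Summable F)
    (ha : Summable fun k => a k ^ 2) (s : ι → G) (k : G) :
    Summable fun i => F i * a (k - s i) ^ 2 :=
  .of_nonneg_of_le (fun i => mul_nonneg (hF0 i) (sq_nonneg _))
    (fun i => mul_le_mul_of_nonneg_left (ha.le_tsum _ fun _ _ => sq_nonneg _) (hF0 i))
    (hF.mul_right _)

theorem summable_mul_comp_sub (hF0 : ∀ i, 0 ≤ F i) (hF : Summable F)
    (ha : Summable fun k => a k ^ 2) (s : ι → G) (k : G) :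
    Summable fun i => F i * a (k - s i) :=
  summable_mul_of_summable_mul_sq hF0 hF (summable_mul_sq_comp_sub hF0 hF ha s k)

/-- Young's inequality `‖F ∗ a‖₂ ≤ ‖F‖₁ ‖a‖₂`, by Cauchy–Schwarz against the weights `F`. -/
theorem tsum_sq_tsum_mul_comp_sub_le (hF0 : ∀ i, 0 ≤ F i) (hF : Summable F)
    (ha : Summable fun k => a k ^ 2) (s : ι → G) :
    Summable (fun k => (∑' i, F i * a (k - s i)) ^ 2) ∧
      ∑' k, (∑' i, F i * a (k - s i)) ^ 2 ≤ (∑' i, F i) ^ 2 * ∑' k, a k ^ 2 := by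
  set S := ∑' i, F i
  set T := ∑' k, a k ^ 2
  have hshift (i : ι) : HasSum (fun k => F i * a (k - s i) ^ 2) (F i * T) :=
    ((Equiv.subRight (s i)).hasSum_iff.mpr ha.hasSum).mul_left (F i)
  have hjoint : Summable fun q : ι × G => F q.1 * a (q.2 - s q.1) ^ 2 :=
    (summable_prod_of_nonneg fun q => mul_nonneg (hF0 q.1) (sq_nonneg _)).2
      ⟨fun i => (hshift i).summable, by simpa only [(hshift _).tsum_eq] using hF.mul_right T⟩
  have hjointSum : HasSum (fun q : ι × G => F q.1 * a (q.2 - s q.1) ^ 2) (S * T) := by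
    convert hjoint.hasSum
    exact (hjoint.hasSum.prod_fiberwise hshift).unique (hF.hasSum.mul_right T) |>.symm
  have hw : HasSum (fun k => ∑' i, F i * a (k - s i) ^ 2) (S * T) :=
    ((Equiv.prodComm G ι).hasSum_iff.mpr hjointSum).prod_fiberwise fun k =>
      (summable_mul_sq_comp_sub hF0 hF ha s k).hasSum
  have hCS (k : G) : (∑' i, F i * a (k - s i)) ^ 2 ≤ S * ∑' i, F i * a (k - s i) ^ 2 :=
    sq_tsum_mul_le_tsum_mul_tsum_mul_sq hF0 hF (summable_mul_sq_comp_sub hF0 hF ha s k)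
  have hbound := hw.summable.mul_left S
  have hsq : Summable fun k => (∑' i, F i * a (k - s i)) ^ 2 :=
    .of_nonneg_of_le (fun k => sq_nonneg _) hCS hbound
  refine ⟨hsq, ?_⟩
  calc ∑' k, (∑' i, F i * a (k - s i)) ^ 2
      ≤ ∑' k, S * ∑' i, F i * a (k - s i) ^ 2 := hsq.tsum_le_tsum hCS hbound
    _ = S ^ 2 * T := by rw [tsum_mul_left, hw.tsum_eq]; ring

end Young

theorem sqrt_tsum_sq_le_two_mul_sqrt_of_le_mul_add {ι : Type*} {a b u : ι → ℝ} {ε S : ℝ}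
    (ha0 : ∀ k, 0 ≤ a k) (ha : Summable fun k => a k ^ 2) (hb : Summable fun k => b k ^ 2)
    (hu : Summable fun k => u k ^ 2) (hle : ∀ k, a k ≤ ε * u k + b k)
    (huS : ∑' k, u k ^ 2 ≤ S ^ 2 * ∑' k, a k ^ 2) (hε : 0 ≤ ε) (hS : 0 ≤ S)
    (hεS : ε * S ≤ 1 / 2) :
    √(∑' k, a k ^ 2) ≤ 2 * √(∑' k, b k ^ 2) := by
  have hpt (k : ι) : a k ^ 2 ≤ 2 * ε ^ 2 * u k ^ 2 + 2 * b k ^ 2 := by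
    nlinarith [ha0 k, hle k, sq_nonneg (ε * u k - b k)]
  have hT : ∑' k, a k ^ 2 ≤ 2 * ε ^ 2 * ∑' k, u k ^ 2 + 2 * ∑' k, b k ^ 2 := by
    rw [← tsum_mul_left, ← tsum_mul_left, ← (hu.mul_left _).tsum_add (hb.mul_left 2)]
    exact ha.tsum_le_tsum hpt ((hu.mul_left _).add (hb.mul_left 2))
  have hεS' : (ε * S) ^ 2 ≤ 1 / 4 := by nlinarith [mul_nonneg hε hS]
  have hT0 : 0 ≤ ∑' k, a k ^ 2 := tsum_nonneg fun k => sq_nonneg _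
  rw [Real.sqrt_le_iff, mul_pow, Real.sq_sqrt (tsum_nonneg fun k => sq_nonneg _)]
  refine ⟨by positivity, ?_⟩
  nlinarith [mul_le_mul_of_nonneg_left huS (by positivity : (0 : ℝ) ≤ 2 * ε ^ 2),
    mul_le_mul_of_nonneg_right hεS' hT0]

section Kernel

theorem summable_and_tsum_le_of_le_abs_rpow {φ : ℤ → ℝ} {A b : ℝ} (hb : 1 < b)
    (hφ0 : ∀ r, 0 ≤ φ r) (hφ : ∀ r, φ r ≤ A * |(r : ℝ)| ^ (-b)) :
    Summable φ ∧ ∑' r, φ r ≤ A * ∑' r : ℤ, |(r : ℝ)| ^ (-b) := by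
  have hmaj := (Real.summable_abs_int_rpow hb).mul_left A
  have hφs := Summable.of_nonneg_of_le hφ0 hφ hmaj
  exact ⟨hφs, (hφs.tsum_le_tsum hφ hmaj).trans_eq tsum_mul_left⟩

variable {M A C : ℝ} {α : ℤ → ℝ}

theorem summable_and_tsum_le_one_add_of_le_abs_rpow (hM : 0 < M) (hα0 : ∀ r, 0 ≤ α r)
    (hα1 : α 0 = 1) (hα : ∀ r, r ≠ 0 → α r ≤ A * |(r : ℝ)| ^ (-(M + 1))) :
    Summable α ∧ ∑' r, α r ≤ 1 + A * ∑' r : ℤ, |(r : ℝ)| ^ (-(M + 1)) := by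
  obtain ⟨hφ, hφle⟩ := summable_and_tsum_le_of_le_abs_rpow (by linarith : 1 < M + 1)
    (φ := fun r => if r = 0 then 0 else α r) (fun r => by split_ifs; exacts [le_rfl, hα0 r])
    fun r => by
      split_ifs with hr
      · rw [hr, Int.cast_zero, abs_zero, Real.zero_rpow (by linarith), mul_zero]
      · exact hα r hr
  have hsplit : HasSum α (1 + ∑' r, if r = 0 then 0 else α r) := by
    convert (hasSum_ite_eq 0 1).add hφ.hasSum using 1
    funext r
    split_ifs with hr <;> simp [hr, hα1]
  exact ⟨hsplit.summable, hsplit.tsum_eq ▸ by linarith⟩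

def amplifiedWeight (α : ℤ → ℝ) (C : ℝ) (r : ℤ) : ℝ :=
  if r = 0 then 0 else α r * (C * |(r : ℝ)|)

theorem amplifiedWeight_nonneg (hC : 0 ≤ C) (hα0 : ∀ r, 0 ≤ α r) (r : ℤ) :
    0 ≤ amplifiedWeight α C r := by
  unfold amplifiedWeight
  split_ifs
  exacts [le_rfl, by have := hα0 r; positivity]

theorem amplifiedWeight_le (hM : M ≠ 0) (hC : 0 ≤ C)
    (hα : ∀ r, r ≠ 0 → α r ≤ A * |(r : ℝ)| ^ (-(M + 1))) (r : ℤ) :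
    amplifiedWeight α C r ≤ C * A * |(r : ℝ)| ^ (-M) := by
  unfold amplifiedWeight
  split_ifs with hr
  · rw [hr, Int.cast_zero, abs_zero, Real.zero_rpow (neg_ne_zero.mpr hM), mul_zero]
  · have hr' : |(r : ℝ)| ≠ 0 := by simpa using hr
    calc α r * (C * |(r : ℝ)|) ≤ A * |(r : ℝ)| ^ (-(M + 1)) * (C * |(r : ℝ)|) :=
          mul_le_mul_of_nonneg_right (hα r hr) (by positivity)
      _ = C * A * |(r : ℝ)| ^ (-(M + 1) + 1) := by rw [Real.rpow_add_one hr']; ring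
      _ = C * A * |(r : ℝ)| ^ (-M) := by ring_nf

def cascadeKernel (α : ℤ → ℝ) (C : ℝ) (p : ℤ × ℤ) : ℝ :=
  amplifiedWeight α C p.1 * α p.2

theorem cascadeKernel_nonneg (hC : 0 ≤ C) (hα0 : ∀ r, 0 ≤ α r) (p : ℤ × ℤ) :
    0 ≤ cascadeKernel α C p :=
  mul_nonneg (amplifiedWeight_nonneg hC hα0 p.1) (hα0 p.2)

theorem summable_cascadeKernel_and_tsum_le (hM : 1 < M) (hC : 0 ≤ C) (hα0 : ∀ r, 0 ≤ α r)
    (hα1 : α 0 = 1) (hα : ∀ r, r ≠ 0 → α r ≤ A * |(r : ℝ)| ^ (-(M + 1))) :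
    Summable (cascadeKernel α C) ∧ ∑' p, cascadeKernel α C p ≤
      C * A * (∑' r : ℤ, |(r : ℝ)| ^ (-M)) *
        (1 + A * ∑' r : ℤ, |(r : ℝ)| ^ (-(M + 1))) := by
  obtain ⟨hαs, hαle⟩ :=
    summable_and_tsum_le_one_add_of_le_abs_rpow (by linarith) hα0 hα1 hα
  have hw0 := amplifiedWeight_nonneg hC hα0
  obtain ⟨hw, hwle⟩ := summable_and_tsum_le_of_le_abs_rpow hM hw0
    (amplifiedWeight_le (by linarith) hC hα)
  have hK : Summable (cascadeKernel α C) := hw.mul_of_nonneg hαs hw0 hα0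
  refine ⟨hK, ?_⟩
  calc ∑' p, cascadeKernel α C p = (∑' r, amplifiedWeight α C r) * ∑' t, α t :=
        (hw.tsum_mul_tsum hαs hK).symm
    _ ≤ _ := mul_le_mul hwle hαle (tsum_nonneg hα0) (hwle.trans' (tsum_nonneg hw0))

theorem tsum_tsum_ite_eq_tsum_cascadeKernel_mul {a : ℤ → ℝ} {k : ℤ}
    (hsum : Summable fun p : ℤ × ℤ => cascadeKernel α C p * a (k - (p.1 + p.2))) :
    (∑' r : ℤ, ∑' t : ℤ,
        if r = 0 then 0 else α r * α t * (C * |(r : ℝ)|) * a (k - r - t)) =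
      ∑' p, cascadeKernel α C p * a (k - (p.1 + p.2)) := by
  rw [hsum.tsum_prod]
  refine tsum_congr fun r => tsum_congr fun t => ?_
  unfold cascadeKernel amplifiedWeight
  split_ifs
  · simp
  · rw [sub_sub]; ring

end Kernel

/-- Abstract two-sided cascade estimate: if all global amplification factors are bounded by
`C|r|`, the iteration inequality
`a_k ≤ (C'/γ) Σ_{r≠0} Σ_t α_r α_t (C|r|) a_{k−r−t} + b_k` can be summed in `ℓ²(ℤ)`:
there is `γ₀ > 0`, depending only on `A, M, C, C'`, such that for `γ ≥ γ₀` one has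
`‖a‖_{ℓ²} ≤ 2 ‖b‖_{ℓ²}`. -/
theorem stmt_14 (M A C C' : ℝ) (hM : 2 ≤ M) (hA : 0 < A) (hC : 0 < C) (hC' : 0 < C') :
    ∃ γ₀ > (0 : ℝ),
      ∀ α : ℤ → ℝ, (∀ r : ℤ, 0 ≤ α r) → α 0 = 1 →
        (∀ r : ℤ, r ≠ 0 → α r ≤ A * ((|r| : ℤ) : ℝ) ^ (-(M + 1))) →
        ∀ a b : ℤ → ℝ, (∀ k : ℤ, 0 ≤ a k) → (∀ k : ℤ, 0 ≤ b k) →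
          Summable (fun k : ℤ => (a k) ^ 2) → Summable (fun k : ℤ => (b k) ^ 2) →
          ∀ γ : ℝ, 0 < γ →
            (∀ k : ℤ, a k ≤ (C' / γ) *
                (∑' r : ℤ, ∑' t : ℤ,
                  if r = 0 then 0 else α r * α t * (C * ((|r| : ℤ) : ℝ)) * a (k - r - t)) + b k) →
            γ₀ ≤ γ →
            Real.sqrt (∑' k : ℤ, (a k) ^ 2) ≤ 2 * Real.sqrt (∑' k : ℤ, (b k) ^ 2) := by
  set Z₀ := ∑' r : ℤ, |(r : ℝ)| ^ (-M)
  set Z₁ := ∑' r : ℤ, |(r : ℝ)| ^ (-(M + 1))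
  have hZ₀ : 0 < Z₀ :=
    (Real.summable_abs_int_rpow (by linarith)).tsum_pos (fun r => by positivity) 1 (by simp)
  have hZ₁ : 0 ≤ Z₁ := tsum_nonneg fun r => by positivity
  refine ⟨2 * C' * (C * A * Z₀ * (1 + A * Z₁)), by positivity, ?_⟩
  intro α hα0 hα1 hα a b ha0 _ ha hb γ hγ hiter hγ₀
  simp only [Int.cast_abs] at hα hiter
  obtain ⟨hK, hKle⟩ := summable_cascadeKernel_and_tsum_le (by linarith) hC.le hα0 hα1 hα
  have hK0 := cascadeKernel_nonneg hC.le hα0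
  obtain ⟨hu, hule⟩ := tsum_sq_tsum_mul_comp_sub_le hK0 hK ha fun p => p.1 + p.2
  refine sqrt_tsum_sq_le_two_mul_sqrt_of_le_mul_add (ε := C' / γ) ha0 ha hb hu (fun k => ?_) hule
    (by positivity) (tsum_nonneg hK0) ?_
  · rw [← tsum_tsum_ite_eq_tsum_cascadeKernel_mul (summable_mul_comp_sub hK0 hK ha _ k)]
    exact hiter k
  · rw [div_mul_eq_mul_div, div_le_iff₀ hγ]
    nlinarith
end

section
/- Let (c_m)_{m≥1} be nonnegative real numbers whose sum E := Σ_{m≥1} c_m is finite and satisfies E < 1. Define g₁ := 1 and, recursively for k ≥ 2, g_k := Σ_{j=1}^{k−1} c_{k−j} g_j. Let (G_j)_{j≥1} be nonnegative real numbers with Σ_{j≥1} G_j² < ∞, and define V_k := Σ_{j=1}^{k} g_{k−j+1} G_j for k ≥ 1. Then Σ_{k≥1} V_k² ≤ (1/(1 − E))² · Σ_{j≥1} G_j². -/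
/-- With `(g_k)` the cascade coefficients built from nonnegative `(c_m)_{m≥1}` with
`E := Σ c_m < 1`, and `V_k := Σ_{j=1}^{k} g_{k−j+1} G_j` for nonnegative square-summable
`(G_j)_{j≥1}`, one has `Σ_{k≥1} V_k² ≤ (1/(1−E))² Σ_{j≥1} G_j²`. -/
theorem stmt_16 (c : ℕ → ℝ) (hc : ∀ m : ℕ, 1 ≤ m → 0 ≤ c m)
    (hsum : Summable fun m : ℕ => c (m + 1))
    (hE : (∑' m : ℕ, c (m + 1)) < 1)
    (g : ℕ → ℝ) (hg1 : g 1 = 1)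
    (hgk : ∀ k : ℕ, 2 ≤ k → g k = ∑ j ∈ Finset.Ico 1 k, c (k - j) * g j)
    (G : ℕ → ℝ) (hG : ∀ j : ℕ, 1 ≤ j → 0 ≤ G j)
    (hGsum : Summable fun j : ℕ => (G (j + 1)) ^ 2)
    (V : ℕ → ℝ)
    (hV : ∀ k : ℕ, 1 ≤ k → V k = ∑ j ∈ Finset.Icc 1 k, g (k - j + 1) * G j) :
    Summable (fun k : ℕ => (V (k + 1)) ^ 2) ∧
    (∑' k : ℕ, (V (k + 1)) ^ 2) ≤
      (1 / (1 - ∑' m : ℕ, c (m + 1))) ^ 2 * ∑' j : ℕ, (G (j + 1)) ^ 2 := by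
  set E : ℝ := ∑' m : ℕ, c (m + 1) with hEdef
  have hE0 : 0 ≤ E := tsum_nonneg fun m => hc (m + 1) (by omega)
  have h1E : (0:ℝ) < 1 - E := by linarith
  set B : ℝ := 1 / (1 - E) with hBdef
  have hB0 : 0 < B := by positivity
  -- g is nonnegative
  have hgpos : ∀ k : ℕ, 1 ≤ k → 0 ≤ g k := by
    intro k
    induction k using Nat.strong_induction_on with
    | _ k ih =>
      intro hk1
      rcases eq_or_lt_of_le hk1 with h | h
      · rw [← h, hg1]; exact zero_le_one
      · rw [hgk k h]
        apply Finset.sum_nonneg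
        intro j hj
        simp only [Finset.mem_Ico] at hj
        exact mul_nonneg (hc _ (by omega)) (ih j hj.2 hj.1)
  -- partial sums of c are ≤ E
  have hcsum : ∀ s : Finset ℕ, (∑ m ∈ s, c (m + 1)) ≤ E :=
    fun s => Summable.sum_le_tsum s (fun m _ => hc (m + 1) (by omega)) hsum
  -- partial sums of g are ≤ B
  have hS : ∀ n : ℕ, (∑ k ∈ Finset.Icc 1 n, g k) ≤ B := by
    intro n
    have key : (∑ k ∈ Finset.Icc 1 n, g k) ≤ 1 + E * (∑ k ∈ Finset.Icc 1 n, g k) := by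
      rcases Nat.eq_zero_or_pos n with h0 | hn1
      · subst h0; simp
      · have hsplit : Finset.Icc 1 n = insert 1 (Finset.Icc 2 n) := by
          ext k; simp [Finset.mem_Icc, Finset.mem_insert]; omega
        have hmem : 1 ∉ Finset.Icc 2 n := by simp
        have hsum1 : (∑ k ∈ Finset.Icc 1 n, g k) = 1 + ∑ k ∈ Finset.Icc 2 n, g k := by
          rw [hsplit, Finset.sum_insert hmem, hg1]
        have step1 : (∑ k ∈ Finset.Icc 2 n, g k)
            = ∑ k ∈ Finset.Icc 2 n, ∑ j ∈ Finset.Icc 1 n,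
                (if j < k then c (k - j) * g j else 0) := by
          apply Finset.sum_congr rfl
          intro k hk
          simp only [Finset.mem_Icc] at hk
          rw [hgk k hk.1, ← Finset.sum_filter]
          apply Finset.sum_congr ?_ (fun _ _ => rfl)
          ext j; simp only [Finset.mem_Ico, Finset.mem_filter, Finset.mem_Icc]; omega
        have inner : ∀ j ∈ Finset.Icc 1 n,
            (∑ k ∈ Finset.Icc 2 n, (if j < k then c (k - j) * g j else 0)) ≤ E * g j := by
          intro j hj
          simp only [Finset.mem_Icc] at hj
          have hgj : 0 ≤ g j := hgpos j hj.1
          have e1 : (∑ k ∈ Finset.Icc 2 n, (if j < k then c (k - j) * g j else 0))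
              = (∑ k ∈ Finset.Icc (j+1) n, c (k - j)) * g j := by
            rw [← Finset.sum_filter, ← Finset.sum_mul]
            congr 1
            apply Finset.sum_congr ?_ (fun _ _ => rfl)
            ext k; simp only [Finset.mem_filter, Finset.mem_Icc]; omega
          rw [e1]
          apply mul_le_mul_of_nonneg_right _ hgj
          have e2 : (∑ k ∈ Finset.Icc (j+1) n, c (k - j))
              = ∑ m ∈ Finset.range (n + 1 - (j+1)), c ((j + 1 + m) - j) := by
            rw [← Finset.Ico_add_one_right_eq_Icc, Finset.sum_Ico_eq_sum_range]
          rw [e2]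
          have e3 : (∑ m ∈ Finset.range (n + 1 - (j+1)), c ((j + 1 + m) - j))
              = ∑ m ∈ Finset.range (n + 1 - (j+1)), c (m + 1) := by
            apply Finset.sum_congr rfl
            intro m _; congr 1; omega
          rw [e3]; exact hcsum _
        have hD : (∑ k ∈ Finset.Icc 2 n, g k) ≤ E * ∑ k ∈ Finset.Icc 1 n, g k := by
          rw [step1, Finset.sum_comm]
          calc (∑ j ∈ Finset.Icc 1 n, ∑ k ∈ Finset.Icc 2 n,
                  (if j < k then c (k - j) * g j else 0))
              ≤ ∑ j ∈ Finset.Icc 1 n, E * g j := Finset.sum_le_sum inner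
            _ = E * ∑ j ∈ Finset.Icc 1 n, g j := by rw [Finset.mul_sum]
        linarith
    set S := ∑ k ∈ Finset.Icc 1 n, g k
    have : S * (1 - E) ≤ 1 := by nlinarith
    rw [hBdef, le_div_iff₀ h1E]
    linarith [this]
  -- reindexed partial sums of g
  have hS' : ∀ (a b : ℕ), 1 ≤ a → (∑ k ∈ Finset.Icc a b, g (k - a + 1)) ≤ B := by
    intro a b ha
    rcases le_or_gt a b with h | h
    · have : (∑ k ∈ Finset.Icc a b, g (k - a + 1)) = ∑ m ∈ Finset.Icc 1 (b - a + 1), g m := by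
        apply Finset.sum_nbij' (fun k => k - a + 1) (fun m => m + a - 1)
        · intro k hk; simp only [Finset.mem_Icc] at hk ⊢; omega
        · intro m hm; simp only [Finset.mem_Icc] at hm ⊢; omega
        · intro k hk; simp only [Finset.mem_Icc] at hk; omega
        · intro m hm; simp only [Finset.mem_Icc] at hm; omega
        · intros; rfl
      rw [this]; exact hS _
    · rw [Finset.Icc_eq_empty (by omega)]; simp; linarith
  -- Cauchy–Schwarz pointwise bound: V k ^ 2 ≤ B * W k
  have hVW : ∀ k : ℕ, 1 ≤ k →
      (V k) ^ 2 ≤ B * ∑ j ∈ Finset.Icc 1 k, g (k - j + 1) * (G j) ^ 2 := by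
    intro k hk
    rw [hV k hk]
    have hnn : ∀ j ∈ Finset.Icc 1 k, 0 ≤ g (k - j + 1) := by
      intro j hj; exact hgpos _ (by omega)
    have cs := Finset.sum_mul_sq_le_sq_mul_sq (Finset.Icc 1 k)
      (fun j => Real.sqrt (g (k - j + 1))) (fun j => Real.sqrt (g (k - j + 1)) * G j)
    have e1 : (∑ j ∈ Finset.Icc 1 k,
        Real.sqrt (g (k - j + 1)) * (Real.sqrt (g (k - j + 1)) * G j))
        = ∑ j ∈ Finset.Icc 1 k, g (k - j + 1) * G j := by
      apply Finset.sum_congr rfl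
      intro j hj
      rw [← mul_assoc, Real.mul_self_sqrt (hnn j hj)]
    have e2 : (∑ j ∈ Finset.Icc 1 k, Real.sqrt (g (k - j + 1)) ^ 2)
        = ∑ j ∈ Finset.Icc 1 k, g (k - j + 1) := by
      apply Finset.sum_congr rfl
      intro j hj
      rw [Real.sq_sqrt (hnn j hj)]
    have e3 : (∑ j ∈ Finset.Icc 1 k, (Real.sqrt (g (k - j + 1)) * G j) ^ 2)
        = ∑ j ∈ Finset.Icc 1 k, g (k - j + 1) * (G j) ^ 2 := by
      apply Finset.sum_congr rfl
      intro j hj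
      rw [mul_pow, Real.sq_sqrt (hnn j hj)]
    rw [e1, e2, e3] at cs
    refine cs.trans ?_
    apply mul_le_mul_of_nonneg_right ?_ ?_
    · have : (∑ j ∈ Finset.Icc 1 k, g (k - j + 1)) = ∑ m ∈ Finset.Icc 1 k, g m := by
        apply Finset.sum_nbij' (fun j => k - j + 1) (fun m => k - m + 1)
        · intro j hj; simp only [Finset.mem_Icc] at hj ⊢; omega
        · intro m hm; simp only [Finset.mem_Icc] at hm ⊢; omega
        · intro j hj; simp only [Finset.mem_Icc] at hj; omega
        · intro m hm; simp only [Finset.mem_Icc] at hm; omega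
        · intros; rfl
      rw [this]; exact hS k
    · apply Finset.sum_nonneg
      intro j hj
      exact mul_nonneg (hnn j hj) (sq_nonneg _)
  -- partial sums of G² bounded by its tsum
  set T : ℝ := ∑' j : ℕ, (G (j + 1)) ^ 2 with hTdef
  have hT0 : 0 ≤ T := tsum_nonneg fun j => sq_nonneg _
  have hGpart : ∀ n : ℕ, (∑ j ∈ Finset.Icc 1 n, (G j) ^ 2) ≤ T := by
    intro n
    have : (∑ j ∈ Finset.Icc 1 n, (G j) ^ 2) = ∑ j ∈ Finset.range (n + 1 - 1), (G (j + 1)) ^ 2 := by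
      rw [← Finset.Ico_add_one_right_eq_Icc, Finset.sum_Ico_eq_sum_range]
      apply Finset.sum_congr rfl
      intro m _; congr 2; omega
    rw [this]
    exact Summable.sum_le_tsum _ (fun j _ => sq_nonneg _) hGsum
  -- bound partial sums of V²
  have hmain : ∀ N : ℕ, (∑ k ∈ Finset.range N, (V (k + 1)) ^ 2) ≤ B ^ 2 * T := by
    intro N
    have e0 : (∑ k ∈ Finset.Icc 1 N, (V k) ^ 2) = ∑ k ∈ Finset.range (N + 1 - 1), (V (k + 1)) ^ 2 := by
      rw [← Finset.Ico_add_one_right_eq_Icc, Finset.sum_Ico_eq_sum_range]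
      apply Finset.sum_congr rfl
      intro m _; congr 2; omega
    simp only [Nat.add_sub_cancel] at e0
    rw [← e0]
    have step1 : (∑ k ∈ Finset.Icc 1 N, (V k) ^ 2)
        ≤ B * ∑ k ∈ Finset.Icc 1 N, ∑ j ∈ Finset.Icc 1 k, g (k - j + 1) * (G j) ^ 2 := by
      rw [Finset.mul_sum]
      apply Finset.sum_le_sum
      intro k hk
      simp only [Finset.mem_Icc] at hk
      exact hVW k hk.1
    refine step1.trans ?_
    have step2 : (∑ k ∈ Finset.Icc 1 N, ∑ j ∈ Finset.Icc 1 k, g (k - j + 1) * (G j) ^ 2)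
        ≤ B * T := by
      have e1 : (∑ k ∈ Finset.Icc 1 N, ∑ j ∈ Finset.Icc 1 k, g (k - j + 1) * (G j) ^ 2)
          = ∑ k ∈ Finset.Icc 1 N, ∑ j ∈ Finset.Icc 1 N,
              (if j ≤ k then g (k - j + 1) * (G j) ^ 2 else 0) := by
        apply Finset.sum_congr rfl
        intro k hk
        simp only [Finset.mem_Icc] at hk
        rw [← Finset.sum_filter]
        apply Finset.sum_congr ?_ (fun _ _ => rfl)
        ext j; simp only [Finset.mem_Icc, Finset.mem_filter]; omega
      rw [e1, Finset.sum_comm]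
      have inner : ∀ j ∈ Finset.Icc 1 N,
          (∑ k ∈ Finset.Icc 1 N, (if j ≤ k then g (k - j + 1) * (G j) ^ 2 else 0))
            ≤ B * (G j) ^ 2 := by
        intro j hj
        simp only [Finset.mem_Icc] at hj
        have e2 : (∑ k ∈ Finset.Icc 1 N, (if j ≤ k then g (k - j + 1) * (G j) ^ 2 else 0))
            = (∑ k ∈ Finset.Icc j N, g (k - j + 1)) * (G j) ^ 2 := by
          rw [← Finset.sum_filter, ← Finset.sum_mul]
          congr 1
          apply Finset.sum_congr ?_ (fun _ _ => rfl)
          ext k; simp only [Finset.mem_Icc, Finset.mem_filter]; omega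
        rw [e2]
        exact mul_le_mul_of_nonneg_right (hS' j N hj.1) (sq_nonneg _)
      calc (∑ j ∈ Finset.Icc 1 N, ∑ k ∈ Finset.Icc 1 N,
              (if j ≤ k then g (k - j + 1) * (G j) ^ 2 else 0))
          ≤ ∑ j ∈ Finset.Icc 1 N, B * (G j) ^ 2 := Finset.sum_le_sum inner
        _ = B * ∑ j ∈ Finset.Icc 1 N, (G j) ^ 2 := by rw [Finset.mul_sum]
        _ ≤ B * T := mul_le_mul_of_nonneg_left (hGpart N) hB0.le
    calc B * (∑ k ∈ Finset.Icc 1 N, ∑ j ∈ Finset.Icc 1 k, g (k - j + 1) * (G j) ^ 2)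
        ≤ B * (B * T) := mul_le_mul_of_nonneg_left step2 hB0.le
      _ = B ^ 2 * T := by ring
  have hsummable : Summable (fun k : ℕ => (V (k + 1)) ^ 2) :=
    summable_of_sum_range_le (fun n => sq_nonneg _) hmain
  exact ⟨hsummable, Summable.tsum_le_of_sum_range_le hsummable hmain⟩
end
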